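/- arXiv:2310.12643 — 6 statements merged into one kernel-verified Lean document; each statement's English description precedes it below -/
import Mathlib

section
/- For every p in (1,2] and every real x with |x| ≤ π, one has |sin x|^p ≤ A(p)|cos x|^p − B(p)cos(px), where A(p) = tan^{p−1}(π/(2p))/cot(π/(2p)) and B(p) = sin^{p−1}(π/(2p))/cos(π/(2p)). -/
/-!
Both sides are even in `x`, so it suffices to take `y = |x| ∈ [0, π]`; put `t = π / (2p)`.
For `y < π / 2` divide by `cos^p y`: the quotient `(sin^p y + B cos (p y)) / cos^p y` has
derivative of the sign of `sin^(p-1) y - B sin ((p-1) y)`. Since `sin^r y / sin (r y)` decreases for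
`0 < r ≤ 1` and equals `B` at `y = t`, the quotient increases up to `t` and decreases after it,
and at `t` it equals `tan^p t = A`. On `[π/2, π/p]` the left side is at most `1 + B cos (pπ/2)`,
which the same sign fact at `y = π/2` makes nonpositive. For `y > π/p` substitute `u = π - y`:
now `sin^(p-1) u / sin ((p-1)(π - u))` increases and is still `≤ B` at `u = π - π/p`, so the
corresponding quotient decreases and is bounded by its value `B cos (pπ)` at `u = 0`, which is
`≤ A` by an elementary estimate.
-/

open Real Set

namespace Pichorides

lemma hasDerivAt_sin_rpow_div_sin_comp {r x w' : ℝ} {w : ℝ → ℝ} (hw : HasDerivAt w w' x)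
    (hx : 0 < sin x) (hwx : sin (w x) ≠ 0) :
    HasDerivAt (fun y => sin y ^ r / sin (w y))
      (sin x ^ (r - 1) * (r * cos x * sin (w x) - w' * sin x * cos (w x)) / sin (w x) ^ 2) x := by
  have hpow : sin x ^ r = sin x ^ (r - 1) * sin x := by
    rw [rpow_sub_one hx.ne', div_mul_cancel₀ _ hx.ne']
  refine (((hasDerivAt_sin x).rpow_const (p := r) (Or.inl hx.ne')).div
    ((hasDerivAt_sin (w x)).comp x hw) hwx).congr_deriv ?_
  rw [hpow, Function.comp_apply]
  ring

lemma antitoneOn_sin_rpow_div_sin_mul {r : ℝ} (hr0 : 0 < r) (hr1 : r ≤ 1) :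
    AntitoneOn (fun x => sin x ^ r / sin (r * x)) (Ioo 0 π) := by
  have hd : ∀ x ∈ Ioo 0 π, HasDerivAt (fun x => sin x ^ r / sin (r * x))
      (sin x ^ (r - 1) * (r * sin (r * x - x)) / sin (r * x) ^ 2) x := by
    rintro x ⟨hx0, hxπ⟩
    have hrx : 0 < sin (r * x) := sin_pos_of_pos_of_lt_pi (by positivity) (by nlinarith)
    convert hasDerivAt_sin_rpow_div_sin_comp ((hasDerivAt_id' x).const_mul r)
      (sin_pos_of_pos_of_lt_pi hx0 hxπ) hrx.ne' using 1
    rw [sin_sub]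
    ring
  refine antitoneOn_of_hasDerivWithinAt_nonpos (convex_Ioo 0 π)
    (fun x hx => (hd x hx).continuousAt.continuousWithinAt)
    (by rw [interior_Ioo]; exact fun x hx => (hd x hx).hasDerivWithinAt) ?_
  rw [interior_Ioo]
  rintro x ⟨hx0, hxπ⟩
  have hsin : sin (r * x - x) ≤ 0 := by
    rw [show r * x - x = -((1 - r) * x) by ring, sin_neg, neg_nonpos]
    exact sin_nonneg_of_nonneg_of_le_pi (by nlinarith) (by nlinarith)
  have hpow := rpow_nonneg (sin_nonneg_of_nonneg_of_le_pi hx0.le hxπ.le) (r - 1)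
  exact div_nonpos_of_nonpos_of_nonneg
    (mul_nonpos_of_nonneg_of_nonpos hpow (by nlinarith)) (sq_nonneg _)

lemma monotoneOn_sin_rpow_div_sin_mul_pi_sub {r : ℝ} (hr0 : 0 < r) (hr1 : r ≤ 1) :
    MonotoneOn (fun x => sin x ^ r / sin (r * (π - x))) (Ioo 0 π) := by
  have hd : ∀ x ∈ Ioo 0 π, HasDerivAt (fun x => sin x ^ r / sin (r * (π - x)))
      (sin x ^ (r - 1) * (r * sin (r * (π - x) + x)) / sin (r * (π - x)) ^ 2) x := by
    rintro x ⟨hx0, hxπ⟩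
    have hrx : 0 < sin (r * (π - x)) :=
      sin_pos_of_pos_of_lt_pi (by nlinarith) (by nlinarith)
    convert hasDerivAt_sin_rpow_div_sin_comp (((hasDerivAt_id' x).const_sub π).const_mul r)
      (sin_pos_of_pos_of_lt_pi hx0 hxπ) hrx.ne' using 1
    rw [sin_add]
    ring
  refine monotoneOn_of_hasDerivWithinAt_nonneg (convex_Ioo 0 π)
    (fun x hx => (hd x hx).continuousAt.continuousWithinAt)
    (by rw [interior_Ioo]; exact fun x hx => (hd x hx).hasDerivWithinAt) ?_
  rw [interior_Ioo]
  rintro x ⟨hx0, hxπ⟩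
  have hsin : 0 ≤ sin (r * (π - x) + x) :=
    sin_nonneg_of_nonneg_of_le_pi (by nlinarith) (by nlinarith)
  have hpow := rpow_nonneg (sin_nonneg_of_nonneg_of_le_pi hx0.le hxπ.le) (r - 1)
  positivity

/-- The quotient of the two sides of the inequality: `F p (B p) 0 y` for `y < π/2`, and
`F p (B p) π (π - y)` for `y > π/p`. -/
noncomputable def F (p K c x : ℝ) : ℝ := (sin x ^ p + K * cos (p * (x - c))) / cos x ^ p

lemma hasDerivAt_F (p K c : ℝ) {x : ℝ} (hx : x ∈ Ioo 0 (π / 2)) :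
    HasDerivAt (F p K c)
      (p * (sin x ^ (p - 1) - K * sin ((p - 1) * x - p * c)) / cos x ^ (p + 1)) x := by
  have hs := sin_pos_of_pos_of_lt_pi hx.1 (by linarith [hx.2, pi_pos])
  have hc := cos_pos_of_mem_Ioo ⟨by linarith [hx.1, pi_pos], hx.2⟩
  have hsp : sin x ^ p = sin x ^ (p - 1) * sin x := by
    rw [rpow_sub_one hs.ne', div_mul_cancel₀ _ hs.ne']
  have hcp : cos x ^ p = cos x ^ (p - 1) * cos x := by
    rw [rpow_sub_one hc.ne', div_mul_cancel₀ _ hc.ne']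
  have hcp1 : cos x ^ (p + 1) = cos x ^ (p - 1) * cos x * cos x := by
    rw [rpow_add_one hc.ne', hcp]
  have hsub :
      sin ((p - 1) * x - p * c) = sin (p * (x - c)) * cos x - cos (p * (x - c)) * sin x := by
    rw [← sin_sub]; ring_nf
  refine ((((hasDerivAt_sin x).rpow_const (p := p) (Or.inl hs.ne')).add
    (((hasDerivAt_cos _).comp x (((hasDerivAt_id' x).sub_const c).const_mul p)).const_mul K)).div
    ((hasDerivAt_cos x).rpow_const (p := p) (Or.inl hc.ne'))
    (rpow_pos_of_pos hc p).ne').congr_deriv ?_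
  simp only [Pi.add_apply, Function.comp_apply]
  rw [hsub, hcp1, hsp, hcp]
  field_simp
  linear_combination p * sin x ^ (p - 1) * sin_sq_add_cos_sq x

lemma continuousOn_F {p K c : ℝ} (hp : 0 < p) : ContinuousOn (F p K c) (Ico 0 (π / 2)) := by
  refine .div (by fun_prop (disch := positivity)) (by fun_prop (disch := positivity)) ?_
  rintro x ⟨hx0, hx⟩
  exact (rpow_pos_of_pos (cos_pos_of_mem_Ioo ⟨by linarith [pi_pos], hx⟩) p).ne'

lemma monotoneOn_F {p K c : ℝ} {D : Set ℝ} (hp : 0 < p) (hD : Convex ℝ D)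
    (hDsub : D ⊆ Ico 0 (π / 2))
    (hK : ∀ x ∈ interior D, K * sin ((p - 1) * x - p * c) ≤ sin x ^ (p - 1)) :
    MonotoneOn (F p K c) D := by
  have hI : ∀ x ∈ interior D, x ∈ Ioo 0 (π / 2) := fun x hx => by
    simpa using interior_mono hDsub hx
  refine monotoneOn_of_hasDerivWithinAt_nonneg hD ((continuousOn_F hp).mono hDsub)
    (fun x hx => (hasDerivAt_F p K c (hI x hx)).hasDerivWithinAt) fun x hx => ?_
  have hc := cos_pos_of_mem_Ioo ⟨by linarith [(hI x hx).1, pi_pos], (hI x hx).2⟩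
  exact div_nonneg (mul_nonneg hp.le (sub_nonneg.2 (hK x hx))) (rpow_pos_of_pos hc _).le

lemma antitoneOn_F {p K c : ℝ} {D : Set ℝ} (hp : 0 < p) (hD : Convex ℝ D)
    (hDsub : D ⊆ Ico 0 (π / 2))
    (hK : ∀ x ∈ interior D, sin x ^ (p - 1) ≤ K * sin ((p - 1) * x - p * c)) :
    AntitoneOn (F p K c) D := by
  have hI : ∀ x ∈ interior D, x ∈ Ioo 0 (π / 2) := fun x hx => by
    simpa using interior_mono hDsub hx
  refine antitoneOn_of_hasDerivWithinAt_nonpos hD ((continuousOn_F hp).mono hDsub)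
    (fun x hx => (hasDerivAt_F p K c (hI x hx)).hasDerivWithinAt) fun x hx => ?_
  have hc := cos_pos_of_mem_Ioo ⟨by linarith [(hI x hx).1, pi_pos], (hI x hx).2⟩
  exact div_nonpos_of_nonpos_of_nonneg (mul_nonpos_of_nonneg_of_nonpos hp.le
    (sub_nonpos.2 (hK x hx))) (rpow_pos_of_pos hc _).le

noncomputable def A (p : ℝ) : ℝ := tan (π / (2 * p)) ^ (p - 1) / cot (π / (2 * p))

noncomputable def B (p : ℝ) : ℝ := sin (π / (2 * p)) ^ (p - 1) / cos (π / (2 * p))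

variable {p : ℝ}

lemma pi_div_two_mul_pos (hp : 0 < p) : 0 < π / (2 * p) := div_pos pi_pos (by linarith)

lemma pi_div_four_le_pi_div_two_mul (hp : 0 < p) (hp2 : p ≤ 2) : π / 4 ≤ π / (2 * p) := by
  rw [div_le_div_iff₀ (by norm_num) (by linarith)]
  nlinarith [pi_pos]

lemma pi_div_two_mul_lt_pi_div_two (hp1 : 1 < p) : π / (2 * p) < π / 2 := by
  rw [div_lt_div_iff₀ (by linarith) (by norm_num)]
  nlinarith [pi_pos]

lemma mul_pi_div_two_mul (hp : p ≠ 0) : p * (π / (2 * p)) = π / 2 := by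
  field_simp

lemma sin_pi_div_two_mul_pos (hp1 : 1 < p) : 0 < sin (π / (2 * p)) :=
  sin_pos_of_pos_of_lt_pi (pi_div_two_mul_pos (by linarith))
    (by linarith [pi_div_two_mul_lt_pi_div_two hp1, pi_pos])

lemma cos_pi_div_two_mul_pos (hp1 : 1 < p) : 0 < cos (π / (2 * p)) :=
  cos_pos_of_mem_Ioo ⟨by linarith [pi_div_two_mul_pos (p := p) (by linarith), pi_pos],
    pi_div_two_mul_lt_pi_div_two hp1⟩

lemma cos_pi_div_two_mul_le_sin (hp1 : 1 < p) (hp2 : p ≤ 2) :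
    cos (π / (2 * p)) ≤ sin (π / (2 * p)) := by
  have h := pi_div_four_le_pi_div_two_mul (by linarith) hp2
  rw [← cos_pi_div_two_sub]
  exact cos_le_cos_of_nonneg_of_le_pi (by linarith [pi_div_two_mul_lt_pi_div_two hp1])
    (by linarith [pi_div_two_mul_lt_pi_div_two hp1, pi_pos]) (by linarith)

lemma A_eq_tan_rpow (hp1 : 1 < p) : A p = tan (π / (2 * p)) ^ p := by
  have htan : 0 < tan (π / (2 * p)) := by
    rw [tan_eq_sin_div_cos]
    exact div_pos (sin_pi_div_two_mul_pos hp1) (cos_pi_div_two_mul_pos hp1)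
  rw [A, cot_eq_cos_div_sin, div_div_eq_mul_div, mul_div_assoc, ← tan_eq_sin_div_cos,
    ← rpow_add_one htan.ne', sub_add_cancel]

lemma B_pos (hp1 : 1 < p) : 0 < B p :=
  div_pos (rpow_pos_of_pos (sin_pi_div_two_mul_pos hp1) _) (cos_pi_div_two_mul_pos hp1)

lemma sin_rpow_div_sin_pi_div_two_mul (hp1 : 1 < p) :
    sin (π / (2 * p)) ^ (p - 1) / sin ((p - 1) * (π / (2 * p))) = B p := by
  rw [sub_mul, mul_pi_div_two_mul (by linarith), one_mul, sin_pi_div_two_sub, B]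

lemma B_mul_sin_le_sin_rpow (hp1 : 1 < p) (hp2 : p ≤ 2) {x : ℝ} (hx0 : 0 < x)
    (hxt : x ≤ π / (2 * p)) : B p * sin ((p - 1) * x) ≤ sin x ^ (p - 1) := by
  have ht := pi_div_two_mul_lt_pi_div_two hp1
  have hR := antitoneOn_sin_rpow_div_sin_mul (r := p - 1) (by linarith) (by linarith)
    ⟨hx0, by linarith [pi_pos]⟩ ⟨pi_div_two_mul_pos (by linarith), by linarith [pi_pos]⟩ hxt
  beta_reduce at hR
  rw [sin_rpow_div_sin_pi_div_two_mul hp1] at hR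
  exact (le_div_iff₀ (sin_pos_of_pos_of_lt_pi (by nlinarith) (by nlinarith [pi_pos]))).1 hR

lemma sin_rpow_le_B_mul_sin (hp1 : 1 < p) (hp2 : p ≤ 2) {x : ℝ} (htx : π / (2 * p) ≤ x)
    (hxπ : x < π) : sin x ^ (p - 1) ≤ B p * sin ((p - 1) * x) := by
  have ht := pi_div_two_mul_pos (p := p) (by linarith)
  have hR := antitoneOn_sin_rpow_div_sin_mul (r := p - 1) (by linarith) (by linarith)
    ⟨ht, by linarith [pi_div_two_mul_lt_pi_div_two hp1, pi_pos]⟩ ⟨by linarith, hxπ⟩ htx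
  beta_reduce at hR
  rw [sin_rpow_div_sin_pi_div_two_mul hp1] at hR
  exact (div_le_iff₀ (sin_pos_of_pos_of_lt_pi (by nlinarith) (by nlinarith [pi_pos]))).1 hR

lemma sin_pi_div_rpow_le_B_mul (hp1 : 1 < p) (hp2 : p ≤ 2) :
    sin (π / p) ^ (p - 1) ≤ B p * sin (π / p) := by
  set s := sin (π / (2 * p))
  set c := cos (π / (2 * p))
  have hs : 0 < s := sin_pi_div_two_mul_pos hp1
  have hc : 0 < c := cos_pi_div_two_mul_pos hp1
  have hcs : c ≤ s := cos_pi_div_two_mul_le_sin hp1 hp2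
  have hsin : sin (π / p) = 2 * s * c := by
    rw [← sin_two_mul, mul_div_assoc', mul_div_mul_left _ _ two_ne_zero]
  have h2c : (2 * c) ^ (p - 1) ≤ 2 * s := by
    rcases le_total (2 * c) 1 with h | h
    · nlinarith [rpow_le_one (by positivity) h (by linarith : 0 ≤ p - 1),
        sin_sq_add_cos_sq (π / (2 * p))]
    · calc (2 * c) ^ (p - 1) ≤ (2 * c) ^ (1 : ℝ) := rpow_le_rpow_of_exponent_le h (by linarith)
        _ ≤ 2 * s := by rw [rpow_one]; linarith
  calc sin (π / p) ^ (p - 1) = (2 * c) ^ (p - 1) * s ^ (p - 1) := by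
        rw [hsin, mul_right_comm, mul_rpow (by positivity) hs.le]
    _ ≤ 2 * s * s ^ (p - 1) := mul_le_mul_of_nonneg_right h2c (rpow_nonneg hs.le _)
    _ = B p * sin (π / p) := by
        rw [hsin, show B p = s ^ (p - 1) / c from rfl]
        field_simp

lemma sin_rpow_le_B_mul_sin_pi_sub (hp1 : 1 < p) (hp2 : p ≤ 2) {u : ℝ} (hu0 : 0 < u)
    (hu : u ≤ π - π / p) : sin u ^ (p - 1) ≤ B p * sin ((p - 1) * (π - u)) := by
  have hπp : 0 < π / p := div_pos pi_pos (by linarith)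
  have hπp' : π / p < π := div_lt_self pi_pos hp1
  have hQ := monotoneOn_sin_rpow_div_sin_mul_pi_sub (r := p - 1) (by linarith) (by linarith)
    ⟨hu0, by linarith⟩ ⟨by linarith, by linarith⟩ hu
  beta_reduce at hQ
  rw [show (p - 1) * (π - (π - π / p)) = π - π / p by field_simp; ring, sin_pi_sub] at hQ
  have hsin : 0 < sin (π / p) := sin_pos_of_pos_of_lt_pi hπp hπp'
  have hv : 0 < sin ((p - 1) * (π - u)) :=
    sin_pos_of_pos_of_lt_pi (by nlinarith) (by nlinarith)
  rw [← div_le_iff₀ hv]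
  exact hQ.trans ((div_le_iff₀ hsin).2 (sin_pi_div_rpow_le_B_mul hp1 hp2))

lemma four_div_pi_mul_sub_one_le_sin_sub_cos {t : ℝ} (h1 : π / 4 ≤ t) (h2 : t ≤ π / 2) :
    4 / π * t - 1 ≤ sin t - cos t := by
  have hθ : (4 / π * t - 1) * (π / 4) = t - π / 4 := by field_simp
  have hπ4 : 0 < π / 4 := by positivity
  have hθ0 : 0 ≤ 4 / π * t - 1 := by
    rw [← mul_nonneg_iff_of_pos_right hπ4, hθ]; linarith
  have hθ1 : 4 / π * t - 1 ≤ 1 := by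
    rw [← mul_le_mul_iff_of_pos_right hπ4, hθ]; linarith
  have hconc := strictConcaveOn_sin_Icc.concaveOn.2 (x := 0) (y := π / 4)
    ⟨le_rfl, pi_pos.le⟩ ⟨hπ4.le, by linarith [pi_pos]⟩ (sub_nonneg.2 hθ1) hθ0 (by ring)
  simp only [smul_eq_mul, mul_zero, sin_zero, zero_add, hθ, sin_sub, sin_pi_div_four,
    cos_pi_div_four] at hconc
  nlinarith [sqrt_nonneg 2, sq_sqrt (show (0 : ℝ) ≤ 2 by norm_num)]

/-- Weighted AM-GM bounds the left side by `(p-1) cos t + (2-p)`; the chord bound for the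
concave `sin t - cos t` on `[π/4, π/2]` closes the gap, as `2 - p = p (4t/π - 1)` and
`p (1 - cos t) ≤ 1`. -/
lemma cos_rpow_le_sin_pi_div_two_mul (h32 : 3 / 2 ≤ p) (hp2 : p ≤ 2) :
    cos (π / (2 * p)) ^ (p - 1) ≤ sin (π / (2 * p)) := by
  have hp1 : 1 < p := by linarith
  have ht := pi_div_four_le_pi_div_two_mul (p := p) (by linarith) hp2
  have hamgm := geom_mean_le_arith_mean2_weighted (p₁ := cos (π / (2 * p))) (p₂ := 1)
    (by linarith) (by linarith) (cos_pi_div_two_mul_pos hp1).le zero_le_one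
    (by ring : p - 1 + (2 - p) = 1)
  rw [one_rpow, mul_one, mul_one] at hamgm
  have hchord := four_div_pi_mul_sub_one_le_sin_sub_cos ht (pi_div_two_mul_lt_pi_div_two hp1).le
  have hθ0 : 0 ≤ 4 / π * (π / (2 * p)) - 1 := by
    rw [show 4 / π * (π / (2 * p)) = 2 / p by field_simp; ring, sub_nonneg,
      le_div_iff₀ (by linarith)]
    linarith
  have hcos : 1 / 2 ≤ cos (π / (2 * p)) := by
    rw [← cos_pi_div_three]
    refine cos_le_cos_of_nonneg_of_le_pi (pi_div_two_mul_pos (by linarith)).le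
      (by linarith [pi_pos]) ?_
    rw [div_le_div_iff₀ (by linarith) (by norm_num)]
    nlinarith [pi_pos]
  have hpθ : p * (4 / π * (π / (2 * p)) - 1) = 2 - p := by
    field_simp; ring
  nlinarith [mul_nonneg hθ0 (by nlinarith : 0 ≤ 1 - p * (1 - cos (π / (2 * p))))]

lemma cos_mul_pi_mul_cos_rpow_le_sin (hp1 : 1 < p) (hp2 : p ≤ 2) :
    cos (p * π) * cos (π / (2 * p)) ^ (p - 1) ≤ sin (π / (2 * p)) := by
  have hC := rpow_pos_of_pos (cos_pi_div_two_mul_pos hp1) (p - 1)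
  rcases le_total p (3 / 2) with h | h
  · have hcos : cos (p * π) ≤ 0 := cos_nonpos_of_pi_div_two_le_of_le (by nlinarith [pi_pos])
      (by nlinarith [pi_pos])
    nlinarith [sin_pi_div_two_mul_pos hp1]
  · nlinarith [cos_le_one (p * π), cos_rpow_le_sin_pi_div_two_mul h hp2]

lemma B_mul_cos_mul_pi_le_A (hp1 : 1 < p) (hp2 : p ≤ 2) : B p * cos (p * π) ≤ A p := by
  set s := sin (π / (2 * p))
  set c := cos (π / (2 * p))
  have hs : 0 < s := sin_pi_div_two_mul_pos hp1
  have hc : 0 < c := cos_pi_div_two_mul_pos hp1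
  have hspow : s ^ p = s ^ (p - 1) * s := by
    rw [rpow_sub_one hs.ne', div_mul_cancel₀ _ hs.ne']
  have hcpow : c ^ p = c ^ (p - 1) * c := by
    rw [rpow_sub_one hc.ne', div_mul_cancel₀ _ hc.ne']
  rw [A_eq_tan_rpow hp1, tan_eq_sin_div_cos, div_rpow hs.le hc.le,
    show B p = s ^ (p - 1) / c from rfl, div_mul_eq_mul_div,
    div_le_div_iff₀ hc (rpow_pos_of_pos hc p), hspow, hcpow]
  have := mul_le_mul_of_nonneg_left (cos_mul_pi_mul_cos_rpow_le_sin hp1 hp2)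
    (mul_nonneg (rpow_nonneg hs.le (p - 1)) hc.le)
  linarith

lemma F_pi_div_two_mul (hp1 : 1 < p) : F p (B p) 0 (π / (2 * p)) = A p := by
  rw [F, sub_zero, mul_pi_div_two_mul (by linarith), cos_pi_div_two, mul_zero, add_zero,
    A_eq_tan_rpow hp1, tan_eq_sin_div_cos,
    div_rpow (sin_pi_div_two_mul_pos hp1).le (cos_pi_div_two_mul_pos hp1).le]

lemma F_zero (hp : 0 < p) (K c : ℝ) : F p K c 0 = K * cos (p * c) := by
  rw [F, sin_zero, cos_zero, zero_rpow hp.ne', one_rpow, div_one, zero_add, zero_sub, mul_neg,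
    cos_neg]

lemma F_le_A_of_lt_pi_div_two (hp1 : 1 < p) (hp2 : p ≤ 2) {y : ℝ} (hy : y ∈ Ico 0 (π / 2)) :
    F p (B p) 0 y ≤ A p := by
  have hp : 0 < p := by linarith
  have ht := pi_div_two_mul_lt_pi_div_two hp1
  rw [← F_pi_div_two_mul hp1]
  rcases le_total y (π / (2 * p)) with h | h
  · refine monotoneOn_F hp (convex_Icc _ _) (Icc_subset_Ico_right ht) ?_
      ⟨hy.1, h⟩ ⟨(pi_div_two_mul_pos hp).le, le_rfl⟩ h
    rw [interior_Icc]
    intro x hx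
    rw [mul_zero, sub_zero]
    exact B_mul_sin_le_sin_rpow hp1 hp2 hx.1 hx.2.le
  · refine antitoneOn_F hp (convex_Ico _ _) (Ico_subset_Ico_left (pi_div_two_mul_pos hp).le)
      ?_
      ⟨le_rfl, ht⟩ ⟨h, hy.2⟩ h
    rw [interior_Ico]
    intro x hx
    rw [mul_zero, sub_zero]
    exact sin_rpow_le_B_mul_sin hp1 hp2 hx.1.le (by linarith [hx.2, pi_pos])

lemma F_pi_le_A (hp1 : 1 < p) (hp2 : p ≤ 2) {u : ℝ} (hu : u ∈ Ico 0 (π - π / p)) :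
    F p (B p) π u ≤ A p := by
  have hp : 0 < p := by linarith
  have hu' : π - π / p ≤ π / 2 := by
    have : π / 2 ≤ π / p := div_le_div_of_nonneg_left pi_pos.le hp hp2
    linarith
  have hanti : AntitoneOn (F p (B p) π) (Ico 0 (π - π / p)) := by
    refine antitoneOn_F hp (convex_Ico _ _) (Ico_subset_Ico_right hu') ?_
    rw [interior_Ico]
    intro x hx
    rw [show (p - 1) * x - p * π = -((p - 1) * (π - x)) - π by ring, sin_sub_pi, sin_neg,
      neg_neg]
    exact sin_rpow_le_B_mul_sin_pi_sub hp1 hp2 hx.1 hx.2.le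
  calc F p (B p) π u ≤ F p (B p) π 0 := hanti ⟨le_rfl, by linarith [hu.1, hu.2]⟩ hu hu.1
    _ = B p * cos (p * π) := F_zero hp _ _
    _ ≤ A p := B_mul_cos_mul_pi_le_A hp1 hp2

lemma sin_rpow_add_B_mul_cos_nonpos (hp1 : 1 < p) (hp2 : p ≤ 2) {y : ℝ} (h1 : π / 2 ≤ y)
    (h2 : y ≤ π / p) : sin y ^ p + B p * cos (p * y) ≤ 0 := by
  have hp : 0 < p := by linarith
  have hkey :=
    sin_rpow_le_B_mul_sin hp1 hp2 (pi_div_two_mul_lt_pi_div_two hp1).le (by linarith [pi_pos])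
  rw [sin_pi_div_two, one_rpow, show (p - 1) * (π / 2) = p * (π / 2) - π / 2 by ring,
    sin_sub_pi_div_two] at hkey
  have hcos : cos (p * y) ≤ cos (p * (π / 2)) := by
    refine cos_le_cos_of_nonneg_of_le_pi (by positivity) ?_ (by nlinarith)
    rwa [le_div_iff₀ hp, mul_comm] at h2
  have hsin : sin y ^ p ≤ 1 :=
    rpow_le_one (sin_nonneg_of_nonneg_of_le_pi (by linarith [pi_pos])
      (h2.trans (div_le_self pi_pos.le hp1.le))) (sin_le_one y) hp.le
  nlinarith [B_pos hp1]

lemma sin_rpow_add_B_mul_cos_le (hp1 : 1 < p) (hp2 : p ≤ 2) {y : ℝ} (hy0 : 0 ≤ y)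
    (hyπ : y ≤ π) :
    sin y ^ p + B p * cos (p * y) ≤ A p * |cos y| ^ p := by
  have hp : 0 < p := by linarith
  rcases lt_or_ge y (π / 2) with h | h
  · have hc : 0 < cos y := cos_pos_of_mem_Ioo ⟨by linarith [pi_pos], h⟩
    have hF := F_le_A_of_lt_pi_div_two hp1 hp2 ⟨hy0, h⟩
    rwa [F, sub_zero, div_le_iff₀ (rpow_pos_of_pos hc p), ← abs_of_pos hc] at hF
  rcases le_or_gt y (π / p) with h' | h'
  · have hA : 0 ≤ A p := by
      rw [A_eq_tan_rpow hp1]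
      exact rpow_nonneg (tan_nonneg_of_nonneg_of_le_pi_div_two (pi_div_two_mul_pos hp).le
        (pi_div_two_mul_lt_pi_div_two hp1).le) p
    exact (sin_rpow_add_B_mul_cos_nonpos hp1 hp2 h h').trans (by positivity)
  · have hπp : π / 2 ≤ π / p := div_le_div_of_nonneg_left pi_pos.le hp hp2
    have hc : 0 < cos (π - y) := cos_pos_of_mem_Ioo ⟨by linarith [pi_pos], by linarith⟩
    have hF := F_pi_le_A hp1 hp2 ⟨by linarith, by linarith⟩ (u := π - y)
    rwa [F, div_le_iff₀ (rpow_pos_of_pos hc p), sin_pi_sub,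
      show p * (π - y - π) = -(p * y) by ring, cos_neg, ← abs_of_pos hc, cos_pi_sub,
      abs_neg] at hF

end Pichorides

open Pichorides in
/-- Pichorides' trigonometric inequality, extended to `|x| ≤ π`. -/
theorem pichorides_inequality (p : ℝ) (hp1 : 1 < p) (hp2 : p ≤ 2)
    (x : ℝ) (hx : |x| ≤ π) :
    |Real.sin x| ^ p ≤
      (Real.tan (π / (2 * p)) ^ (p - 1) / Real.cot (π / (2 * p))) * |Real.cos x| ^ p
        - (Real.sin (π / (2 * p)) ^ (p - 1) / Real.cos (π / (2 * p))) * Real.cos (p * x) := by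
  have h := sin_rpow_add_B_mul_cos_le hp1 hp2 (abs_nonneg x) hx
  rw [← abs_sin_eq_sin_abs_of_abs_le_pi hx, cos_abs,
    show p * |x| = |p * x| by rw [abs_mul, abs_of_pos (by linarith : 0 < p)], cos_abs] at h
  rw [A, B] at h
  linarith
end

section
/- For every p in (1,2] and every real t with |t| ≤ π, one has −1 + cos(π/(2p))^{−p} |cos t|^p − cos(pt) tan(π/(2p)) ≥ 0. -/
/-!
With `c = π / (2p)`, `A = cos c ^ p` and `B = sin c * cos c ^ (p - 1)` one has `C(p) = 1 / A`
and `D(p) = B / A`, so the inequality reads `A + B cos (p t) ≤ |cos t| ^ p`. The reflections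
`t ↦ -t` and `t ↦ π - t` reduce it to `t ∈ [0, π/2]`, where `f(s) = cos s ^ p - B cos (p s) - A`
has a double zero at `c`. With `g(s) = cos (p s)`, the Wronskian `W = f' g - f g'` satisfies
`W' = (f'' + p² f) g = q g`, where `q(s) = p (p - 1) cos s ^ (p - 2) - p² A` is increasing and
`q(c) ≥ 0` by Jordan's inequality. Since `W(0) = W(c) = 0`, this forces `W ≤ 0`, so `f / g`
decreases on either side of `c`, where it tends to `0`; as `g` changes sign at `c`, `f ≥ 0`.
-/

open Real Set Filter Topology

theorem Real.two_mul_div_pi_le_sin_sq {x : ℝ} (hx₁ : π / 4 ≤ x) (hx₂ : x ≤ π / 2) :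
    2 * x / π ≤ sin x ^ 2 := by
  have hJordan := mul_le_sin (x := 2 * x - π / 2) (by linarith) (by linarith)
  have hsin : sin (2 * x - π / 2) = 2 * sin x ^ 2 - 1 := by
    rw [sin_sub_pi_div_two, cos_two_mul, cos_sq']
    ring
  have hπ : 2 / π * (2 * x - π / 2) = 2 * (2 * x / π) - 1 := by
    field_simp
  linarith

theorem tendsto_div_nhdsNE_of_hasDerivAt {f g : ℝ → ℝ} {a f' g' : ℝ}
    (hf : HasDerivAt f f' a) (hg : HasDerivAt g g' a) (hfa : f a = 0) (hga : g a = 0)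
    (hg' : g' ≠ 0) : Tendsto (fun x => f x / g x) (𝓝[≠] a) (𝓝 (f' / g')) := by
  refine ((hasDerivAt_iff_tendsto_slope.mp hf).div (hasDerivAt_iff_tendsto_slope.mp hg)
    hg').congr' ?_
  filter_upwards [self_mem_nhdsWithin] with x hx
  simp only [Pi.div_apply, slope_def_field, hfa, hga, sub_zero]
  rw [div_div_div_cancel_right₀ (sub_ne_zero.mpr hx)]

theorem antitoneOn_div_of_wronskian_nonpos {f f' g g' : ℝ → ℝ} {D : Set ℝ} (hD : Convex ℝ D)
    (hf : ContinuousOn f D) (hg : ContinuousOn g D) (hg₀ : ∀ x ∈ D, g x ≠ 0)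
    (hf' : ∀ x ∈ interior D, HasDerivAt f (f' x) x) (hg' : ∀ x ∈ interior D, HasDerivAt g (g' x) x)
    (hW : ∀ x ∈ interior D, f' x * g x - f x * g' x ≤ 0) :
    AntitoneOn (fun x => f x / g x) D := by
  refine antitoneOn_of_hasDerivWithinAt_nonpos hD (hf.div hg hg₀)
    (fun x hx => ((hf' x hx).div (hg' x hx) (hg₀ x (interior_subset hx))).hasDerivWithinAt)
    fun x hx => div_nonpos_of_nonpos_of_nonneg (hW x hx) (sq_nonneg _)

theorem hasDerivAt_wronskian_cos {f f' : ℝ → ℝ} {p s f'' : ℝ} (hf : HasDerivAt f (f' s) s)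
    (hf' : HasDerivAt f' f'' s) :
    HasDerivAt (fun x => f' x * cos (p * x) + p * f x * sin (p * x))
      ((f'' + p ^ 2 * f s) * cos (p * s)) s := by
  have hlin : HasDerivAt (fun x => p * x) p s := by simpa using (hasDerivAt_id s).const_mul p
  exact ((hf'.mul hlin.cos).add ((hf.const_mul p).mul hlin.sin)).congr_deriv (by ring)

theorem Real.cos_le_cos_of_le_of_add_le_two_pi {a b : ℝ} (ha : 0 ≤ a) (hab : a ≤ b)
    (h : a + b ≤ 2 * π) : cos b ≤ cos a := by
  rcases le_total b π with hb | hb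
  · exact cos_le_cos_of_nonneg_of_le_pi ha hb hab
  · rw [← cos_two_pi_sub b]
    exact cos_le_cos_of_nonneg_of_le_pi ha (by linarith) (by linarith)

namespace Verbitsky

variable {p c s : ℝ}

/-- With `A = cos c ^ p` and `B = sin c * cos c ^ (p - 1)`, the curve `A + B cos (p s)` touches
`cos s ^ p` at `s = c` whenever `p c = π / 2`. -/
noncomputable def gap (p c s : ℝ) : ℝ :=
  cos s ^ p - sin c * cos c ^ (p - 1) * cos (p * s) - cos c ^ p

noncomputable def gapDeriv (p c s : ℝ) : ℝ :=
  p * (sin c * cos c ^ (p - 1) * sin (p * s) - cos s ^ (p - 1) * sin s)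

noncomputable def forcing (p c s : ℝ) : ℝ := p * (p - 1) * cos s ^ (p - 2) - p ^ 2 * cos c ^ p

noncomputable def wronskian (p c s : ℝ) : ℝ :=
  gapDeriv p c s * cos (p * s) + p * gap p c s * sin (p * s)

lemma continuous_gap (hp : 0 ≤ p) : Continuous (gap p c) := by
  unfold gap
  have := continuous_rpow_const hp
  fun_prop

lemma hasDerivAt_gap (hs : cos s ≠ 0) : HasDerivAt (gap p c) (gapDeriv p c s) s := by
  have hlin : HasDerivAt (fun x => p * x) p s := by simpa using (hasDerivAt_id s).const_mul p
  have hpow := (hasDerivAt_cos s).rpow_const (p := p) (Or.inl hs)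
  exact ((hpow.sub (hlin.cos.const_mul _)).sub_const _).congr_deriv (by unfold gapDeriv; ring)

lemma hasDerivAt_gapDeriv (hs : cos s ≠ 0) :
    HasDerivAt (gapDeriv p c) (forcing p c s - p ^ 2 * gap p c s) s := by
  have hlin : HasDerivAt (fun x => p * x) p s := by simpa using (hasDerivAt_id s).const_mul p
  have hpow := (hasDerivAt_cos s).rpow_const (p := p - 1) (Or.inl hs)
  refine (((hlin.sin.const_mul _).sub (hpow.mul (hasDerivAt_sin s))).const_mul p).congr_deriv ?_
  have hsub2 : cos s ^ (p - 2) = cos s ^ p / cos s ^ 2 := by exact_mod_cast rpow_sub_natCast hs p 2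
  unfold forcing gap
  rw [show p - 1 - 1 = p - 2 by ring, rpow_sub_one hs, hsub2]
  field_simp
  linear_combination (p * (p - 1) * cos s ^ p) * sin_sq_add_cos_sq s

lemma hasDerivAt_wronskian (hs : cos s ≠ 0) :
    HasDerivAt (wronskian p c) (forcing p c s * cos (p * s)) s :=
  (hasDerivAt_wronskian_cos (hasDerivAt_gap hs) (hasDerivAt_gapDeriv hs)).congr_deriv (by ring)

lemma mem_Ico_of_mul_eq_pi_div_two (hp1 : 1 < p) (hp2 : p ≤ 2) (hpc : p * c = π / 2) :
    c ∈ Ico (π / 4) (π / 2) := by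
  have hc : 0 < c := by nlinarith [pi_pos]
  constructor <;> nlinarith

lemma cos_pos_of_mul_eq_pi_div_two (hp1 : 1 < p) (hp2 : p ≤ 2) (hpc : p * c = π / 2) :
    0 < cos c := by
  obtain ⟨hc₁, hc₂⟩ := mem_Ico_of_mul_eq_pi_div_two hp1 hp2 hpc
  exact cos_pos_of_mem_Ioo ⟨by linarith [pi_pos], hc₂⟩

lemma gap_self (hpc : p * c = π / 2) : gap p c c = 0 := by
  simp [gap, hpc]

lemma gapDeriv_self (hpc : p * c = π / 2) : gapDeriv p c c = 0 := by
  simp only [gapDeriv, hpc, sin_pi_div_two]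
  ring

lemma wronskian_zero : wronskian p c 0 = 0 := by
  simp [wronskian, gapDeriv]

lemma wronskian_self (hpc : p * c = π / 2) : wronskian p c c = 0 := by
  simp [wronskian, gap_self hpc, hpc]

lemma monotoneOn_forcing (hp1 : 1 ≤ p) (hp2 : p ≤ 2) :
    MonotoneOn (forcing p c) (Ico 0 (π / 2)) := by
  intro x hx y hy hxy
  have hcos : cos y ^ (p - 2) ≥ cos x ^ (p - 2) :=
    rpow_le_rpow_of_nonpos (cos_pos_of_mem_Ioo ⟨by linarith [hy.1, pi_pos], hy.2⟩)
      (cos_le_cos_of_nonneg_of_le_pi hx.1 (by linarith [hy.2, pi_pos]) hxy) (by linarith)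
  unfold forcing
  gcongr

lemma forcing_self_nonneg (hp1 : 1 < p) (hp2 : p ≤ 2) (hpc : p * c = π / 2) :
    0 ≤ forcing p c c := by
  obtain ⟨hc₁, hc₂⟩ := mem_Ico_of_mul_eq_pi_div_two hp1 hp2 hpc
  have hcos := cos_pos_of_mul_eq_pi_div_two hp1 hp2 hpc
  have hsin : 1 ≤ p * sin c ^ 2 := by
    have h := two_mul_div_pi_le_sin_sq hc₁ hc₂.le
    rwa [show 2 * c / π = 1 / p by field_simp; linarith, div_le_iff₀ (by linarith), mul_comm] at h
  have hsub2 : cos c ^ (p - 2) = cos c ^ p / cos c ^ 2 := by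
    exact_mod_cast rpow_sub_natCast hcos.ne' p 2
  have : forcing p c c = p * cos c ^ (p - 2) * (p * sin c ^ 2 - 1) := by
    unfold forcing
    rw [hsub2]
    field_simp
    linear_combination (-p) * sin_sq_add_cos_sq c
  rw [this]
  have := rpow_pos_of_pos hcos (p - 2)
  have : 0 < p := by linarith
  positivity

lemma cos_mul_pos (hp : 0 < p) (hpc : p * c = π / 2) (hs₀ : 0 ≤ s) (hsc : s < c) :
    0 < cos (p * s) :=
  cos_pos_of_mem_Ioo ⟨by nlinarith [pi_pos], by nlinarith⟩

lemma cos_mul_neg (hp : 0 < p) (hp2 : p ≤ 2) (hpc : p * c = π / 2) (hcs : c < s)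
    (hs : s ≤ π / 2) : cos (p * s) < 0 :=
  cos_neg_of_pi_div_two_lt_of_lt (by nlinarith) (by nlinarith [pi_pos])

lemma hasDerivAt_wronskian_of_mem (hs : s ∈ Ico 0 (π / 2)) :
    HasDerivAt (wronskian p c) (forcing p c s * cos (p * s)) s :=
  hasDerivAt_wronskian (cos_pos_of_mem_Ioo ⟨by linarith [hs.1, pi_pos], hs.2⟩).ne'

lemma monotoneOn_wronskian {a b : ℝ} (ha : 0 ≤ a) (hb : b < π / 2)
    (h : ∀ x ∈ Ioo a b, 0 ≤ forcing p c x * cos (p * x)) :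
    MonotoneOn (wronskian p c) (Icc a b) := by
  have hsub : ∀ x ∈ Icc a b, x ∈ Ico 0 (π / 2) := fun x hx => ⟨ha.trans hx.1, hx.2.trans_lt hb⟩
  refine monotoneOn_of_hasDerivWithinAt_nonneg (convex_Icc a b)
    (fun x hx => (hasDerivAt_wronskian_of_mem (hsub x hx)).continuousAt.continuousWithinAt)
    (fun x hx => ?_) (by simpa only [interior_Icc] using h)
  rw [interior_Icc] at hx
  exact (hasDerivAt_wronskian_of_mem (hsub x (Ioo_subset_Icc_self hx))).hasDerivWithinAt

lemma antitoneOn_wronskian {a b : ℝ} (ha : 0 ≤ a) (hb : b < π / 2)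
    (h : ∀ x ∈ Ioo a b, forcing p c x * cos (p * x) ≤ 0) :
    AntitoneOn (wronskian p c) (Icc a b) := by
  have hsub : ∀ x ∈ Icc a b, x ∈ Ico 0 (π / 2) := fun x hx => ⟨ha.trans hx.1, hx.2.trans_lt hb⟩
  refine antitoneOn_of_hasDerivWithinAt_nonpos (convex_Icc a b)
    (fun x hx => (hasDerivAt_wronskian_of_mem (hsub x hx)).continuousAt.continuousWithinAt)
    (fun x hx => ?_) (by simpa only [interior_Icc] using h)
  rw [interior_Icc] at hx
  exact (hasDerivAt_wronskian_of_mem (hsub x (Ioo_subset_Icc_self hx))).hasDerivWithinAt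

/-- `wronskian' = forcing * cos (p ·)`, where `forcing` increases through `0` somewhere before `c`
and `cos (p ·)` changes sign at `c`: so `wronskian` falls and then rises on `[0, c]`,
and falls on `[c, π / 2)`, starting from `0` at both `0` and `c`. -/
lemma wronskian_nonpos (hp1 : 1 < p) (hp2 : p ≤ 2) (hpc : p * c = π / 2)
    (hs : s ∈ Ico 0 (π / 2)) : wronskian p c s ≤ 0 := by
  have hp : 0 < p := by linarith
  obtain ⟨hc₁, hc₂⟩ := mem_Ico_of_mul_eq_pi_div_two hp1 hp2 hpc
  have hc : (0 : ℝ) ≤ c := by linarith [pi_pos]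
  have hmono := monotoneOn_forcing (c := c) hp1.le hp2
  have hIco {x y : ℝ} (hx : 0 ≤ x) (hy : y < π / 2) : Ioo x y ⊆ Ico 0 (π / 2) :=
    fun z hz => ⟨hx.trans hz.1.le, hz.2.trans hy⟩
  rcases le_or_gt s c with hsc | hcs
  · rcases le_or_gt (forcing p c s) 0 with hq | hq
    · have hanti : AntitoneOn (wronskian p c) (Icc 0 s) := by
        refine antitoneOn_wronskian le_rfl hs.2 fun x hx => ?_
        have := hmono (hIco le_rfl hs.2 hx) hs hx.2.le
        exact mul_nonpos_of_nonpos_of_nonneg (this.trans hq)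
          (cos_mul_pos hp hpc hx.1.le (hx.2.trans_le hsc)).le
      exact (hanti (left_mem_Icc.2 hs.1) (right_mem_Icc.2 hs.1) hs.1).trans_eq wronskian_zero
    · have hmono' : MonotoneOn (wronskian p c) (Icc s c) := by
        refine monotoneOn_wronskian hs.1 hc₂ fun x hx => ?_
        have := hmono hs (hIco hs.1 hc₂ hx) hx.1.le
        exact mul_nonneg (hq.le.trans this) (cos_mul_pos hp hpc (hs.1.trans hx.1.le) hx.2).le
      exact (hmono' (left_mem_Icc.2 hsc) (right_mem_Icc.2 hsc) hsc).trans_eq (wronskian_self hpc)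
  · have hanti : AntitoneOn (wronskian p c) (Icc c s) := by
      refine antitoneOn_wronskian hc hs.2 fun x hx => ?_
      have := hmono ⟨hc, hc₂⟩ (hIco hc hs.2 hx) hx.1.le
      exact mul_nonpos_of_nonneg_of_nonpos ((forcing_self_nonneg hp1 hp2 hpc).trans this)
        (cos_mul_neg hp hp2 hpc hx.1 (hx.2.trans hs.2).le).le
    exact (hanti (left_mem_Icc.2 hcs.le) (right_mem_Icc.2 hcs.le) hcs.le).trans_eq
      (wronskian_self hpc)

lemma tendsto_gap_div_cos (hp1 : 1 < p) (hp2 : p ≤ 2) (hpc : p * c = π / 2) :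
    Tendsto (fun x => gap p c x / cos (p * x)) (𝓝[≠] c) (𝓝 0) := by
  have hcos := cos_pos_of_mul_eq_pi_div_two hp1 hp2 hpc
  have hgap : HasDerivAt (gap p c) 0 c := gapDeriv_self hpc ▸ hasDerivAt_gap hcos.ne'
  have hcos_mul : HasDerivAt (fun x => cos (p * x)) (-p) c := by
    simpa [hpc] using ((hasDerivAt_id c).const_mul p).cos
  simpa using tendsto_div_nhdsNE_of_hasDerivAt hgap hcos_mul (gap_self hpc) (by simp [hpc])
    (by linarith)

lemma antitoneOn_gap_div_cos (hp1 : 1 < p) (hp2 : p ≤ 2) (hpc : p * c = π / 2) {D : Set ℝ}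
    (hD : Convex ℝ D) (hDsub : D ⊆ Icc 0 (π / 2)) (hcos : ∀ x ∈ D, cos (p * x) ≠ 0) :
    AntitoneOn (fun x => gap p c x / cos (p * x)) D := by
  have hint : ∀ x ∈ interior D, x ∈ Ico 0 (π / 2) := fun x hx =>
    Ioo_subset_Ico_self (by simpa only [interior_Icc] using interior_mono hDsub hx)
  have hpos : ∀ x ∈ interior D, cos x ≠ 0 := fun x hx =>
    (cos_pos_of_mem_Ioo ⟨by linarith [(hint x hx).1, pi_pos], (hint x hx).2⟩).ne'
  refine antitoneOn_div_of_wronskian_nonpos hD ((continuous_gap (by linarith)).continuousOn)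
    (by fun_prop) hcos (fun x hx => hasDerivAt_gap (hpos x hx))
    (fun x hx => ((hasDerivAt_id x).const_mul p).cos) fun x hx => ?_
  have := wronskian_nonpos hp1 hp2 hpc (hint x hx)
  unfold wronskian at this
  simp only [id, mul_one]
  linarith

lemma gap_nonneg_of_lt (hp1 : 1 < p) (hp2 : p ≤ 2) (hpc : p * c = π / 2) (hs₀ : 0 ≤ s)
    (hsc : s < c) : 0 ≤ gap p c s := by
  have hc₂ := (mem_Ico_of_mul_eq_pi_div_two hp1 hp2 hpc).2
  have hcos : ∀ x ∈ Ico 0 c, 0 < cos (p * x) := fun x hx =>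
    cos_mul_pos (by linarith) hpc hx.1 hx.2
  have hanti := antitoneOn_gap_div_cos hp1 hp2 hpc (convex_Ico 0 c)
    (Ico_subset_Icc_self.trans (Icc_subset_Icc_right hc₂.le)) fun x hx => (hcos x hx).ne'
  have hdiv : 0 ≤ gap p c s / cos (p * s) := by
    refine le_of_tendsto ((tendsto_gap_div_cos hp1 hp2 hpc).mono_left (nhdsLT_le_nhdsNE c)) ?_
    filter_upwards [Ioo_mem_nhdsLT hsc] with x hx
    exact hanti ⟨hs₀, hsc⟩ ⟨hs₀.trans hx.1.le, hx.2⟩ hx.1.le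
  simpa using (le_div_iff₀ (hcos s ⟨hs₀, hsc⟩)).mp hdiv

lemma gap_nonneg_of_gt (hp1 : 1 < p) (hp2 : p ≤ 2) (hpc : p * c = π / 2) (hcs : c < s)
    (hs : s ≤ π / 2) : 0 ≤ gap p c s := by
  have hc₁ := (mem_Ico_of_mul_eq_pi_div_two hp1 hp2 hpc).1
  have hcos : ∀ x ∈ Ioc c (π / 2), cos (p * x) < 0 := fun x hx =>
    cos_mul_neg (by linarith) hp2 hpc hx.1 hx.2
  have hanti := antitoneOn_gap_div_cos hp1 hp2 hpc (convex_Ioc c (π / 2))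
    (Ioc_subset_Icc_self.trans (Icc_subset_Icc_left (by linarith [pi_pos])))
    fun x hx => (hcos x hx).ne
  have hdiv : gap p c s / cos (p * s) ≤ 0 := by
    refine ge_of_tendsto ((tendsto_gap_div_cos hp1 hp2 hpc).mono_left (nhdsGT_le_nhdsNE c)) ?_
    filter_upwards [Ioo_mem_nhdsGT hcs] with x hx
    exact hanti ⟨hx.1, hx.2.le.trans hs⟩ ⟨hcs, hs⟩ hx.2.le
  simpa using (div_le_iff_of_neg (hcos s ⟨hcs, hs⟩)).mp hdiv

lemma gap_nonneg (hp1 : 1 < p) (hp2 : p ≤ 2) (hpc : p * c = π / 2) (hs₀ : 0 ≤ s)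
    (hs : s ≤ π / 2) : 0 ≤ gap p c s := by
  rcases lt_trichotomy s c with hsc | rfl | hcs
  · exact gap_nonneg_of_lt hp1 hp2 hpc hs₀ hsc
  · exact (gap_self hpc).ge
  · exact gap_nonneg_of_gt hp1 hp2 hpc hcs hs

lemma rpow_add_mul_cos_le_abs_cos_rpow (hp1 : 1 < p) (hp2 : p ≤ 2) (hpc : p * c = π / 2)
    {t : ℝ} (ht : |t| ≤ π) : cos c ^ p + sin c * cos c ^ (p - 1) * cos (p * t) ≤ |cos t| ^ p := by
  wlog ht₀ : 0 ≤ t generalizing t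
  · simpa using this (t := -t) (by simpa using ht) (by linarith)
  have htπ : t ≤ π := (abs_le.1 ht).2
  obtain ⟨hc₁, hc₂⟩ := mem_Ico_of_mul_eq_pi_div_two hp1 hp2 hpc
  have hcos := cos_pos_of_mul_eq_pi_div_two hp1 hp2 hpc
  have hB : 0 ≤ sin c * cos c ^ (p - 1) :=
    mul_nonneg (sin_nonneg_of_nonneg_of_le_pi (by linarith [pi_pos]) (by linarith))
      (rpow_pos_of_pos hcos _).le
  rcases le_total t (π / 2) with ht₂ | ht₂
  · have hgap := gap_nonneg hp1 hp2 hpc ht₀ ht₂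
    rw [abs_of_nonneg (cos_nonneg_of_mem_Icc ⟨by linarith [pi_pos], ht₂⟩)]
    unfold gap at hgap
    linarith
  · have hgap := gap_nonneg hp1 hp2 hpc (s := π - t) (by linarith) (by linarith)
    have hcos_mul : cos (p * t) ≤ cos (p * (π - t)) :=
      cos_le_cos_of_le_of_add_le_two_pi (by nlinarith) (by nlinarith) (by nlinarith [pi_pos])
    rw [abs_of_nonpos (cos_nonpos_of_pi_div_two_le_of_le ht₂ (by linarith)), ← cos_pi_sub]
    unfold gap at hgap
    nlinarith [mul_le_mul_of_nonneg_left hcos_mul hB]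

end Verbitsky

/-- Verbitsky's trigonometric inequality. -/
theorem verbitsky_inequality (p : ℝ) (hp1 : 1 < p) (hp2 : p ≤ 2)
    (t : ℝ) (ht : |t| ≤ π) :
    -1 + Real.cos (π / (2 * p)) ^ (-p) * |Real.cos t| ^ p
      - Real.cos (p * t) * Real.tan (π / (2 * p)) ≥ 0 := by
  set c := π / (2 * p)
  have hpc : p * c = π / 2 := by
    simp only [c]
    field_simp
  have hcos := Verbitsky.cos_pos_of_mul_eq_pi_div_two hp1 hp2 hpc
  have htan : tan c = sin c * cos c ^ (p - 1) / cos c ^ p := by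
    rw [tan_eq_sin_div_cos, rpow_sub_one hcos.ne']
    field_simp
  have hkey := Verbitsky.rpow_add_mul_cos_le_abs_cos_rpow hp1 hp2 hpc ht
  have hrw : -1 + cos c ^ (-p) * |cos t| ^ p - cos (p * t) * tan c
      = (|cos t| ^ p - (cos c ^ p + sin c * cos c ^ (p - 1) * cos (p * t))) / cos c ^ p := by
    rw [rpow_neg hcos.le, htan]
    field_simp
    ring
  rw [hrw]
  exact div_nonneg (sub_nonneg.2 hkey) (rpow_pos_of_pos hcos p).le
end

section
/- If p ∈ [1,2] and the inequality |sin x|^p ≤ A(p)|cos x|^p − B(p)cos(px) holds for all x ∈ [0, π/2] (with A(p), B(p) ≥ 0), then it also holds for all x ∈ [π/2, π], using that cos(p(π−x)) ≥ cos(px) for x ∈ [π/2, π] and 1 ≤ p ≤ 2. -/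
open Real

/-- By the sum-to-product formula, `cos (p * (π - x)) - cos (p * x) = -2 sin (p π / 2) sin (p (π - 2x) / 2)`,
a product of a nonnegative and a nonpositive sine when `0 ≤ p ≤ 2`. -/
theorem Real.cos_mul_le_cos_mul_pi_sub {p x : ℝ} (hp0 : 0 ≤ p) (hp2 : p ≤ 2)
    (hx : x ∈ Set.Icc (π / 2) π) : cos (p * x) ≤ cos (p * (π - x)) := by
  obtain ⟨hx1, hx2⟩ := hx
  have hsum : 0 ≤ sin (p * π / 2) :=
    sin_nonneg_of_nonneg_of_le_pi (by positivity) (by nlinarith [pi_pos])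
  have hdiff : sin (p * (π - 2 * x) / 2) ≤ 0 :=
    sin_nonpos_of_nonpos_of_neg_pi_le (by nlinarith) (by nlinarith)
  have h := cos_sub_cos (p * (π - x)) (p * x)
  rw [show (p * (π - x) + p * x) / 2 = p * π / 2 by ring,
    show (p * (π - x) - p * x) / 2 = p * (π - 2 * x) / 2 by ring] at h
  nlinarith [mul_nonpos_of_nonneg_of_nonpos hsum hdiff]

theorem pichorides_extension_general (p : ℝ) (hp1 : 1 ≤ p) (hp2 : p ≤ 2)
    (A B : ℝ) (hB : 0 ≤ B)
    (hyp : ∀ x ∈ Set.Icc (0 : ℝ) (π / 2),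
      |Real.sin x| ^ p ≤ A * |Real.cos x| ^ p - B * Real.cos (p * x)) :
    ∀ x ∈ Set.Icc (π / 2) π,
      |Real.sin x| ^ p ≤ A * |Real.cos x| ^ p - B * Real.cos (p * x) := by
  intro x hx
  have hreflect := hyp (π - x) ⟨by linarith [hx.2], by linarith [hx.1]⟩
  rw [sin_pi_sub, cos_pi_sub, abs_neg] at hreflect
  have hcos := cos_mul_le_cos_mul_pi_sub (by linarith) hp2 hx
  linarith [mul_le_mul_of_nonneg_left hcos hB]

/-- Extension of Pichorides-type inequality from `[0, π/2]` to `[π/2, π]`. -/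
theorem pichorides_extension (p : ℝ) (hp1 : 1 ≤ p) (hp2 : p ≤ 2)
    (A B : ℝ) (hA : 0 ≤ A) (hB : 0 ≤ B)
    (hyp : ∀ x ∈ Set.Icc (0 : ℝ) (π / 2),
      |Real.sin x| ^ p ≤ A * |Real.cos x| ^ p - B * Real.cos (p * x)) :
    ∀ x ∈ Set.Icc (π / 2) π,
      |Real.sin x| ^ p ≤ A * |Real.cos x| ^ p - B * Real.cos (p * x) :=
  pichorides_extension_general p hp1 hp2 A B hB hyp
end

section
/- Let f = g + conj(h) be harmonic with g, h holomorphic, f nonvanishing and f avoiding the negative real axis on its domain, and let p > 1. Then locally Δ(f^p) = p(p−1) f^{p−2}(f_x² + f_y²) = 4 p(p−1) f^{p−2} g'(z) conj(h'(z)), where f^p is a continuous branch of the p-th power. -/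
/-!
Write `∂`, `∂̄` for the Wirtinger derivatives, so that `∂_x = ∂ + ∂̄`, `∂_y = i (∂ - ∂̄)` and
`Δ = 2 (∂̄∂ + ∂∂̄)`. Here `∂f = g'` and `∂̄f = conj h'`, so the chain rule gives
`∂(f^p) = p f^{p-1} g'` and `∂̄(f^p) = p f^{p-1} conj h'`. Since `g'` is holomorphic and `conj h'`
antiholomorphic, the second differentiation only hits `f^{p-1}`, and
`Δ(f^p) = 4 p (p-1) f^{p-2} g' conj h'`. The other form follows from
`f_x² + f_y² = (∂f + ∂̄f)² - (∂f - ∂̄f)² = 4 ∂f ∂̄f`.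
-/
open Complex

/-- Planar Laplacian of a function on `ℂ`. -/
noncomputable def lapC (f : ℂ → ℂ) (z : ℂ) : ℂ :=
  fderiv ℝ (fun w => fderiv ℝ f w 1) z 1
    + fderiv ℝ (fun w => fderiv ℝ f w Complex.I) z Complex.I

open ComplexConjugate Filter Topology

/-- Every `ℝ`-linear map `ℂ → ℂ` is `v ↦ a v + b conj v`; as a derivative, `a` and `b` are the
Wirtinger derivatives `∂` and `∂̄`. -/
noncomputable def wirtingerCLM (a b : ℂ) : ℂ →L[ℝ] ℂ :=
  a • ContinuousLinearMap.id ℝ ℂ + b • conjCLE.toContinuousLinearMap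

@[simp]
lemma wirtingerCLM_apply (a b v : ℂ) : wirtingerCLM a b v = a * v + b * conj v := by
  simp [wirtingerCLM]

lemma wirtingerCLM_one_sq_add_I_sq (a b : ℂ) :
    wirtingerCLM a b 1 ^ 2 + wirtingerCLM a b I ^ 2 = 4 * a * b := by
  simp only [wirtingerCLM_apply, map_one, conj_I]
  linear_combination (a - b) ^ 2 * I_sq

section HasFDerivAt

variable {u v : ℂ → ℂ} {a b c d z : ℂ}

lemma HasDerivAt.hasFDerivAt_wirtingerCLM (hu : HasDerivAt u a z) :
    HasFDerivAt u (wirtingerCLM a 0) z :=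
  hu.complexToReal_fderiv.congr_fderiv <| by ext1 v; simp

lemma HasDerivAt.hasFDerivAt_conj (hu : HasDerivAt u a z) :
    HasFDerivAt (fun w => conj (u w)) (wirtingerCLM 0 (conj a)) z :=
  (conjCLE.toContinuousLinearMap.hasFDerivAt.comp z hu.complexToReal_fderiv).congr_fderiv <| by
    ext1 v; simp

lemma HasFDerivAt.add_wirtingerCLM (hu : HasFDerivAt u (wirtingerCLM a b) z)
    (hv : HasFDerivAt v (wirtingerCLM c d) z) :
    HasFDerivAt (fun w => u w + v w) (wirtingerCLM (a + c) (b + d)) z := by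
  refine (hu.add hv).congr_fderiv ?_
  ext1 w
  simp only [wirtingerCLM_apply, add_apply]
  ring

lemma HasDerivAt.hasFDerivAt_add_conj (hu : HasDerivAt u a z) (hv : HasDerivAt v b z) :
    HasFDerivAt (fun w => u w + conj (v w)) (wirtingerCLM a (conj b)) z := by
  simpa only [add_zero, zero_add] using
    hu.hasFDerivAt_wirtingerCLM.add_wirtingerCLM hv.hasFDerivAt_conj

lemma HasFDerivAt.mul_wirtingerCLM (hu : HasFDerivAt u (wirtingerCLM a b) z)
    (hv : HasFDerivAt v (wirtingerCLM c d) z) :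
    HasFDerivAt (fun w => u w * v w) (wirtingerCLM (u z * c + v z * a) (u z * d + v z * b)) z := by
  refine (hu.mul hv).congr_fderiv ?_
  ext1 w
  simp only [wirtingerCLM_apply, add_apply, smul_apply, smul_eq_mul]
  ring

lemma HasFDerivAt.const_mul_wirtingerCLM (c : ℂ) (hu : HasFDerivAt u (wirtingerCLM a b) z) :
    HasFDerivAt (fun w => c * u w) (wirtingerCLM (c * a) (c * b)) z := by
  refine (hu.const_mul c).congr_fderiv ?_
  ext1 w
  simp only [wirtingerCLM_apply, smul_apply, smul_eq_mul]
  ring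

lemma HasFDerivAt.cpow_const_wirtingerCLM (c : ℂ) (hu : HasFDerivAt u (wirtingerCLM a b) z)
    (hslit : u z ∈ slitPlane) :
    HasFDerivAt (fun w => u w ^ c)
      (wirtingerCLM (c * u z ^ (c - 1) * a) (c * u z ^ (c - 1) * b)) z := by
  refine ((hasStrictDerivAt_cpow_const hslit).hasDerivAt.complexToReal_fderiv.comp z hu
    ).congr_fderiv ?_
  ext1 w
  simp only [wirtingerCLM_apply, ContinuousLinearMap.comp_apply, smul_apply,
    one_apply_eq_self, smul_eq_mul]
  ring

end HasFDerivAt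

/-- `ΔF = 2 (∂̄(∂F) + ∂(∂̄F))`, which needs no symmetry of second derivatives. -/
lemma lapC_eq_of_hasFDerivAt_wirtingerCLM {F P Q : ℂ → ℂ} {z a₁ b₁ a₂ b₂ : ℂ}
    (hF : ∀ᶠ w in 𝓝 z, HasFDerivAt F (wirtingerCLM (P w) (Q w)) w)
    (hP : HasFDerivAt P (wirtingerCLM a₁ b₁) z) (hQ : HasFDerivAt Q (wirtingerCLM a₂ b₂) z) :
    lapC F z = 2 * (b₁ + a₂) := by
  have hFx : (fun w => fderiv ℝ F w 1) =ᶠ[𝓝 z] fun w => P w + Q w := by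
    filter_upwards [hF] with w hw
    simp [hw.fderiv]
  have hFy : (fun w => fderiv ℝ F w I) =ᶠ[𝓝 z] fun w => (P w - Q w) * I := by
    filter_upwards [hF] with w hw
    simp only [hw.fderiv, wirtingerCLM_apply, conj_I]
    ring
  have hPQx : HasFDerivAt (fun w => P w + Q w) _ z := hP.add hQ
  have hPQy : HasFDerivAt (fun w => (P w - Q w) * I) _ z := (hP.sub hQ).mul_const I
  rw [lapC, hFx.fderiv_eq, hFy.fderiv_eq, hPQx.fderiv, hPQy.fderiv]
  simp only [add_apply, sub_apply, smul_apply, wirtingerCLM_apply, map_one, conj_I, smul_eq_mul]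
  linear_combination (a₁ - b₁ - a₂ + b₂) * I_sq

lemma lapC_cpow_of_hasFDerivAt {f g' h' : ℂ → ℂ} {z : ℂ} (c : ℂ)
    (hf : ∀ᶠ w in 𝓝 z, HasFDerivAt f (wirtingerCLM (g' w) (conj (h' w))) w)
    (hslit : ∀ᶠ w in 𝓝 z, f w ∈ slitPlane)
    (hg' : DifferentiableAt ℂ g' z) (hh' : DifferentiableAt ℂ h' z) :
    lapC (fun w => f w ^ c) z = 4 * c * (c - 1) * f z ^ (c - 2) * g' z * conj (h' z) := by
  have hF : ∀ᶠ w in 𝓝 z, HasFDerivAt (fun w => f w ^ c)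
      (wirtingerCLM (c * f w ^ (c - 1) * g' w) (c * f w ^ (c - 1) * conj (h' w))) w := by
    filter_upwards [hf, hslit] with w hfw hw
    exact hfw.cpow_const_wirtingerCLM c hw
  have hpow := (hf.self_of_nhds.cpow_const_wirtingerCLM (c - 1)
    hslit.self_of_nhds).const_mul_wirtingerCLM c
  rw [lapC_eq_of_hasFDerivAt_wirtingerCLM hF
    (hpow.mul_wirtingerCLM hg'.hasDerivAt.hasFDerivAt_wirtingerCLM)
    (hpow.mul_wirtingerCLM hh'.hasDerivAt.hasFDerivAt_conj), show c - 1 - 1 = c - 2 by ring]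
  ring

theorem laplacian_power_general (U : Set ℂ) (hU : IsOpen U) (g h : ℂ → ℂ)
    (hg : DifferentiableOn ℂ g U) (hh : DifferentiableOn ℂ h U)
    (f : ℂ → ℂ) (hf : ∀ z ∈ U, f z = g z + (starRingEnd ℂ) (h z))
    (hrange : ∀ z ∈ U, ¬((f z).im = 0 ∧ (f z).re ≤ 0))
    (p : ℝ) (z : ℂ) (hz : z ∈ U) :
    lapC (fun w => f w ^ (p : ℂ)) z
        = p * (p - 1) * f z ^ ((p : ℂ) - 2)
            * ((fderiv ℝ f z 1) ^ 2 + (fderiv ℝ f z Complex.I) ^ 2) ∧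
      lapC (fun w => f w ^ (p : ℂ)) z
        = 4 * p * (p - 1) * f z ^ ((p : ℂ) - 2)
            * deriv g z * (starRingEnd ℂ) (deriv h z) := by
  have hfd : ∀ᶠ w in 𝓝 z, HasFDerivAt f (wirtingerCLM (deriv g w) (conj (deriv h w))) w := by
    filter_upwards [hU.eventually_mem hz |>.eventually_nhds] with w hUw
    exact ((hg.differentiableAt hUw).hasDerivAt.hasFDerivAt_add_conj
      (hh.differentiableAt hUw).hasDerivAt).congr_of_eventuallyEq (hUw.mono hf)
  have hslit : ∀ᶠ w in 𝓝 z, f w ∈ slitPlane := by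
    filter_upwards [hU.mem_nhds hz] with w hw
    exact mem_slitPlane_iff.mpr ((not_and_or.mp (hrange w hw)).symm.imp not_le.mp id)
  have hlap := lapC_cpow_of_hasFDerivAt (p : ℂ) hfd hslit
    (((hg.analyticOnNhd hU).deriv) z hz).differentiableAt
    (((hh.analyticOnNhd hU).deriv) z hz).differentiableAt
  refine ⟨?_, hlap⟩
  rw [hlap, hfd.self_of_nhds.fderiv, wirtingerCLM_one_sq_add_I_sq]
  ring

/-- For `f = g + conj h` harmonic, nonvanishing, avoiding `(-∞, 0]`, and `p > 1`,
the branch `f^p = exp(p log f)` (principal power) satisfies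
`Δ(f^p) = p(p−1) f^{p−2}(f_x² + f_y²) = 4p(p−1) f^{p−2} g' conj(h')`. -/
theorem laplacian_power (U : Set ℂ) (hU : IsOpen U) (g h : ℂ → ℂ)
    (hg : DifferentiableOn ℂ g U) (hh : DifferentiableOn ℂ h U)
    (f : ℂ → ℂ) (hf : ∀ z ∈ U, f z = g z + (starRingEnd ℂ) (h z))
    (hrange : ∀ z ∈ U, ¬((f z).im = 0 ∧ (f z).re ≤ 0))
    (p : ℝ) (hp : 1 < p) (z : ℂ) (hz : z ∈ U) :
    lapC (fun w => f w ^ (p : ℂ)) z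
        = p * (p - 1) * f z ^ ((p : ℂ) - 2)
            * ((fderiv ℝ f z 1) ^ 2 + (fderiv ℝ f z Complex.I) ^ 2) ∧
      lapC (fun w => f w ^ (p : ℂ)) z
        = 4 * p * (p - 1) * f z ^ ((p : ℂ) - 2)
            * deriv g z * (starRingEnd ℂ) (deriv h z) :=
  laplacian_power_general U hU g h hg hh f hf hrange p z hz
end

section
/- Let u : Ω → ℝ be harmonic, p ∈ (1,2], ε > 0, and w_ε = √(ε² + u²). Then Δ(w_ε^p) = p (ε² + u²)^{(p−4)/2} (ε² + (p−1)u²) |∇u|², and in particular Δ(w_ε^p) ≥ 0. -/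
open Real

/-- Laplacian of a real-valued function on `ℝⁿ`. -/
noncomputable def lapE {n : ℕ} (u : EuclideanSpace ℝ (Fin n) → ℝ)
    (x : EuclideanSpace ℝ (Fin n)) : ℝ :=
  ∑ i, fderiv ℝ (fun y => fderiv ℝ u y (EuclideanSpace.single i 1)) x
    (EuclideanSpace.single i 1)

private lemma hasDerivAt_base {ε : ℝ} (t : ℝ) :
    HasDerivAt (fun s : ℝ => ε ^ 2 + s ^ 2) (2 * t) t := by
  simpa using ((hasDerivAt_pow 2 t).const_add (ε ^ 2))

private lemma hasDerivAt_F {ε p : ℝ} (hε : 0 < ε) (t : ℝ) :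
    HasDerivAt (fun s : ℝ => (ε ^ 2 + s ^ 2) ^ (p / 2 : ℝ))
      (p * t * (ε ^ 2 + t ^ 2) ^ (p / 2 - 1 : ℝ)) t := by
  have hA : (0:ℝ) < ε ^ 2 + t ^ 2 := by positivity
  have h := (hasDerivAt_base (ε := ε) t).rpow_const (p := p / 2) (Or.inl hA.ne')
  convert h using 1
  ring

private lemma hasDerivAt_F' {ε p : ℝ} (hε : 0 < ε) (t : ℝ) :
    HasDerivAt (fun s : ℝ => p * s * (ε ^ 2 + s ^ 2) ^ (p / 2 - 1 : ℝ))
      (p * (ε ^ 2 + t ^ 2) ^ ((p - 4) / 2 : ℝ) * (ε ^ 2 + (p - 1) * t ^ 2)) t := by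
  have hA : (0:ℝ) < ε ^ 2 + t ^ 2 := by positivity
  have h2 := (hasDerivAt_base (ε := ε) t).rpow_const (p := p / 2 - 1) (Or.inl hA.ne')
  have h3 : HasDerivAt (fun s : ℝ => p * s) p t := by
    simpa using (hasDerivAt_id t).const_mul p
  have h4 := h3.mul h2
  refine h4.congr_deriv ?_
  have e1 : (p / 2 - 1 : ℝ) = (p - 4) / 2 + 1 := by ring
  have e2 : (p / 2 - 1 - 1 : ℝ) = (p - 4) / 2 := by ring
  rw [e2, e1, Real.rpow_add hA, Real.rpow_one]
  ring

/-- For harmonic `u`, `ε > 0` and `w_ε = √(ε² + u²)`,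
`Δ(w_ε^p) = p (ε² + u²)^{(p−4)/2} (ε² + (p−1)u²) |∇u|² ≥ 0`. -/
theorem laplacian_regularized_pow {n : ℕ} (Ω : Set (EuclideanSpace ℝ (Fin n)))
    (hΩ : IsOpen Ω) (u : EuclideanSpace ℝ (Fin n) → ℝ)
    (hsm : ContDiffOn ℝ (⊤ : ℕ∞) u Ω) (hharm : ∀ x ∈ Ω, lapE u x = 0)
    (p : ℝ) (hp1 : 1 < p) (hp2 : p ≤ 2) (ε : ℝ) (hε : 0 < ε)
    (x : EuclideanSpace ℝ (Fin n)) (hx : x ∈ Ω) :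
    lapE (fun y => Real.sqrt (ε ^ 2 + u y ^ 2) ^ p) x
        = p * (ε ^ 2 + u x ^ 2) ^ ((p - 4) / 2) * (ε ^ 2 + (p - 1) * u x ^ 2)
            * ‖gradient u x‖ ^ 2 ∧
      0 ≤ lapE (fun y => Real.sqrt (ε ^ 2 + u y ^ 2) ^ p) x := by
  have hp0 : (0:ℝ) < p := by linarith
  have hA : ∀ t : ℝ, (0:ℝ) < ε ^ 2 + t ^ 2 := fun t => by positivity
  set e : Fin n → EuclideanSpace ℝ (Fin n) := fun i => EuclideanSpace.single i 1 with he
  -- rewrite sqrt ^ p as rpow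
  have hfun : (fun y => Real.sqrt (ε ^ 2 + u y ^ 2) ^ p)
      = fun y => (ε ^ 2 + u y ^ 2) ^ (p / 2 : ℝ) := by
    funext y
    rw [Real.sqrt_eq_rpow, ← Real.rpow_mul (hA (u y)).le]
    congr 1
    ring
  have hΩx : Ω ∈ nhds x := hΩ.mem_nhds hx
  have hCA : ∀ y ∈ Ω, ContDiffAt ℝ (⊤ : ℕ∞) u y := fun y hy => hsm.contDiffAt (hΩ.mem_nhds hy)
  have hud : ∀ y ∈ Ω, DifferentiableAt ℝ u y := fun y hy => (hCA y hy).differentiableAt (by simp)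
  -- first derivative of the composite, on Ω
  have hg1 : ∀ y ∈ Ω,
      fderiv ℝ (fun z => (ε ^ 2 + u z ^ 2) ^ (p / 2 : ℝ)) y
        = (p * u y * (ε ^ 2 + u y ^ 2) ^ (p / 2 - 1 : ℝ)) • fderiv ℝ u y := by
    intro y hy
    have h : HasFDerivAt (fun z => (ε ^ 2 + u z ^ 2) ^ (p / 2 : ℝ))
        ((p * u y * (ε ^ 2 + u y ^ 2) ^ (p / 2 - 1 : ℝ)) • fderiv ℝ u y) y :=
      (hasDerivAt_F hε (u y)).comp_hasFDerivAt y (hud y hy).hasFDerivAt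
    exact h.fderiv
  -- second-order data at x
  have hfd2 : DifferentiableAt ℝ (fderiv ℝ u) x :=
    ((hCA x hx).fderiv_right (m := (⊤ : ℕ∞)) (by simp)).differentiableAt (by simp)
  -- derivative of the coefficient F' ∘ u at x
  have hFcoef : HasFDerivAt (fun y => p * u y * (ε ^ 2 + u y ^ 2) ^ (p / 2 - 1 : ℝ))
      ((p * (ε ^ 2 + u x ^ 2) ^ ((p - 4) / 2 : ℝ) * (ε ^ 2 + (p - 1) * u x ^ 2))
        • fderiv ℝ u x) x :=
    (hasDerivAt_F' hε (u x)).comp_hasFDerivAt x (hud x hx).hasFDerivAt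
  -- directional second derivatives of u
  have hdi : ∀ i, HasFDerivAt (fun y => fderiv ℝ u y (e i))
      ((ContinuousLinearMap.apply ℝ ℝ (e i)).comp (fderiv ℝ (fderiv ℝ u) x)) x := fun i =>
    (ContinuousLinearMap.apply ℝ ℝ (e i)).hasFDerivAt.comp x hfd2.hasFDerivAt
  -- the key second-derivative computation, coordinate by coordinate
  have hterm : ∀ i,
      fderiv ℝ (fun y => fderiv ℝ (fun z => (ε ^ 2 + u z ^ 2) ^ (p / 2 : ℝ)) y (e i)) x (e i)
        = (p * u x * (ε ^ 2 + u x ^ 2) ^ (p / 2 - 1 : ℝ))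
            * fderiv ℝ (fun y => fderiv ℝ u y (e i)) x (e i)
          + (p * (ε ^ 2 + u x ^ 2) ^ ((p - 4) / 2 : ℝ) * (ε ^ 2 + (p - 1) * u x ^ 2))
            * (fderiv ℝ u x (e i)) ^ 2 := by
    intro i
    have hEq : (fun y => fderiv ℝ (fun z => (ε ^ 2 + u z ^ 2) ^ (p / 2 : ℝ)) y (e i))
        =ᶠ[nhds x] fun y => (p * u y * (ε ^ 2 + u y ^ 2) ^ (p / 2 - 1 : ℝ))
          * fderiv ℝ u y (e i) := by
      filter_upwards [hΩx] with y hy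
      rw [hg1 y hy]; rfl
    have hprod := hFcoef.mul (hdi i)
    rw [hEq.fderiv_eq, (show HasFDerivAt (fun y => (p * u y * (ε ^ 2 + u y ^ 2) ^ (p / 2 - 1 : ℝ)) * fderiv ℝ u y (e i)) _ x from hprod).fderiv, (hdi i).fderiv]
    simp only [ContinuousLinearMap.add_apply, ContinuousLinearMap.smul_apply,
      ContinuousLinearMap.coe_comp', Function.comp_apply, ContinuousLinearMap.apply_apply,
      smul_eq_mul]
    ring
  -- sum up
  have hlap : lapE (fun z => (ε ^ 2 + u z ^ 2) ^ (p / 2 : ℝ)) x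
      = (p * u x * (ε ^ 2 + u x ^ 2) ^ (p / 2 - 1 : ℝ)) * lapE u x
        + (p * (ε ^ 2 + u x ^ 2) ^ ((p - 4) / 2 : ℝ) * (ε ^ 2 + (p - 1) * u x ^ 2))
          * ∑ i, (fderiv ℝ u x (e i)) ^ 2 := by
    unfold lapE
    rw [Finset.mul_sum, Finset.mul_sum, ← Finset.sum_add_distrib]
    exact Finset.sum_congr rfl fun i _ => hterm i
  -- gradient norm
  have hgradnorm : ‖gradient u x‖ ^ 2 = ∑ i, (fderiv ℝ u x (e i)) ^ 2 := by
    have hcomp : ∀ i, fderiv ℝ u x (e i) = gradient u x i := by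
      intro i
      have : inner ℝ (gradient u x) (e i) = fderiv ℝ u x (e i) :=
        InnerProductSpace.toDual_symm_apply
      rw [← this, he]
      simp only [EuclideanSpace.inner_single_right]; simp
    rw [EuclideanSpace.norm_eq, Real.sq_sqrt (by positivity)]
    exact Finset.sum_congr rfl fun i _ => by rw [hcomp i, Real.norm_eq_abs, sq_abs]
  have key : lapE (fun y => Real.sqrt (ε ^ 2 + u y ^ 2) ^ p) x
      = p * (ε ^ 2 + u x ^ 2) ^ ((p - 4) / 2) * (ε ^ 2 + (p - 1) * u x ^ 2)
          * ‖gradient u x‖ ^ 2 := by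
    rw [hfun, hlap, hharm x hx, hgradnorm]
    ring
  refine ⟨key, ?_⟩
  rw [key]
  have h1 : (0:ℝ) ≤ ε ^ 2 + (p - 1) * u x ^ 2 := by
    have := sq_nonneg (u x); nlinarith [sq_nonneg ε]
  have h2 : (0:ℝ) < (ε ^ 2 + u x ^ 2) ^ ((p - 4) / 2 : ℝ) := Real.rpow_pos_of_pos (hA _) _
  positivity
end

section
/- Let f = g + conj(h) be a harmonic K-quasiconformal-type map on the unit disk with |h'| ≤ k|g'|, k = (K−1)/(K+1), f nonvanishing, and p ∈ (1,2]. Then Δ(|f|^p) ≤ ((1+K²)/2)(p(p−2)/K² + 2p) |Re f|^{p−2} |g' + h'|², provided |Re f| ≤ |f| is used with p−2 ≤ 0. -/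
open Complex

/-- Planar Laplacian of a real-valued function on `ℂ`. -/
noncomputable def lapR (u : ℂ → ℝ) (z : ℂ) : ℝ :=
  fderiv ℝ (fun w => fderiv ℝ u w 1) z 1
    + fderiv ℝ (fun w => fderiv ℝ u w Complex.I) z Complex.I

/-!
For `φ = g + conj h` with `g`, `h` holomorphic, `φ_x = g' + conj h'`, `φ_y = i g' + conj (i h')`
and `φ_xx + φ_yy = 0`, so
`Δ|φ|^p = p(p-2)|φ|^(p-4) (⟪φ, φ_x⟫² + ⟪φ, φ_y⟫²) + 2p|φ|^(p-2) (|g'|² + |h'|²)`.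
The bracket equals `|g' conj φ + h' φ|² ≥ |φ|² (|g'| - |h'|)²`, and `p(p-2) ≤ 0`.
Writing `x = |g'|`, `y = |h'|`, the dilatation bound `y ≤ kx` is `x + y ≤ K(x - y)`, whence
`x² + y² ≤ (1+K²)/2 (x-y)²`; finally `|x - y| ≤ |g' + h'|` and, as `p ≤ 2`,
`|φ|^(p-2) ≤ |Re φ|^(p-2)`.
-/

open Filter Topology
open scoped ComplexConjugate RealInnerProductSpace

theorem lapR_congr {u₁ u₂ : ℂ → ℝ} {z : ℂ} (h : u₁ =ᶠ[𝓝 z] u₂) : lapR u₁ z = lapR u₂ z := by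
  have hd (v : ℂ) : (fun w => fderiv ℝ u₁ w v) =ᶠ[𝓝 z] fun w => fderiv ℝ u₂ w v :=
    (h.fderiv (𝕜 := ℝ)).mono fun w hw => by simp only [hw]
  rw [lapR, lapR, (hd 1).fderiv_eq, (hd I).fderiv_eq]

section NormRpow

variable {E F : Type*} [NormedAddCommGroup E] [NormedSpace ℝ E]
  [NormedAddCommGroup F] [InnerProductSpace ℝ F] {φ : E → F} {z : E}

theorem HasFDerivAt.norm_rpow {φ' : E →L[ℝ] F} (q : ℝ) (hφ : HasFDerivAt φ φ' z)
    (h0 : φ z ≠ 0) :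
    HasFDerivAt (fun w => ‖φ w‖ ^ q) ((q * ‖φ z‖ ^ (q - 2)) • (innerSL ℝ (φ z)).comp φ') z := by
  have hpos : 0 < ‖φ z‖ := norm_pos_iff.mpr h0
  convert hφ.norm_sq.rpow_const (p := q / 2) (Or.inl (by positivity)) using 1
  · funext w
    rw [← Real.rpow_natCast, ← Real.rpow_mul (norm_nonneg _)]
    ring_nf
  · have hpow : (‖φ z‖ ^ 2) ^ (q / 2 - 1) = ‖φ z‖ ^ (q - 2) := by
      rw [← Real.rpow_natCast, ← Real.rpow_mul hpos.le]
      ring_nf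
    ext v
    simp only [smul_apply, ContinuousLinearMap.comp_apply, coe_innerSL_apply, smul_eq_mul, hpow,
      nsmul_eq_mul, Nat.cast_ofNat]
    ring

theorem fderiv_norm_rpow_apply (q : ℝ) (hφ : DifferentiableAt ℝ φ z) (h0 : φ z ≠ 0) (v : E) :
    fderiv ℝ (fun w => ‖φ w‖ ^ q) z v = q * ‖φ z‖ ^ (q - 2) * ⟪φ z, fderiv ℝ φ z v⟫ := by
  rw [(hφ.hasFDerivAt.norm_rpow q h0).fderiv]
  simp

theorem fderiv_fderiv_norm_rpow_apply (q : ℝ) (v : E)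
    (hφ : ∀ᶠ w in 𝓝 z, DifferentiableAt ℝ φ w ∧ φ w ≠ 0)
    (hφv : DifferentiableAt ℝ (fun w => fderiv ℝ φ w v) z) :
    fderiv ℝ (fun w => fderiv ℝ (fun w => ‖φ w‖ ^ q) w v) z v
      = q * (q - 2) * ‖φ z‖ ^ (q - 4) * ⟪φ z, fderiv ℝ φ z v⟫ ^ 2
        + q * ‖φ z‖ ^ (q - 2)
          * (‖fderiv ℝ φ z v‖ ^ 2 + ⟪φ z, fderiv ℝ (fun w => fderiv ℝ φ w v) z v⟫) := by
  obtain ⟨hdz, h0⟩ := hφ.self_of_nhds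
  have hev : (fun w => fderiv ℝ (fun w => ‖φ w‖ ^ q) w v)
      =ᶠ[𝓝 z] fun w => q * ‖φ w‖ ^ (q - 2) * ⟪φ w, fderiv ℝ φ w v⟫ :=
    hφ.mono fun w hw => fderiv_norm_rpow_apply q hw.1 hw.2 v
  have hd : HasFDerivAt (fun w => q * ‖φ w‖ ^ (q - 2) * ⟪φ w, fderiv ℝ φ w v⟫) _ z :=
    ((hdz.hasFDerivAt.norm_rpow (q - 2) h0).const_mul q).mul
      (hdz.hasFDerivAt.inner ℝ hφv.hasFDerivAt)
  rw [hev.fderiv_eq, hd.fderiv]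
  simp only [add_apply, smul_apply, ContinuousLinearMap.comp_apply, fderivInnerCLM_apply,
    ContinuousLinearMap.prod_apply, innerSL_apply_apply, real_inner_self_eq_norm_sq, smul_eq_mul]
  rw [show q - 2 - 2 = q - 4 by ring]
  ring

end NormRpow

theorem lapR_norm_rpow {F : Type*} [NormedAddCommGroup F] [InnerProductSpace ℝ F] {φ : ℂ → F}
    {z : ℂ} (q : ℝ) (hφ : ∀ᶠ w in 𝓝 z, DifferentiableAt ℝ φ w ∧ φ w ≠ 0)
    (hφ₁ : DifferentiableAt ℝ (fun w => fderiv ℝ φ w 1) z)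
    (hφI : DifferentiableAt ℝ (fun w => fderiv ℝ φ w I) z)
    (hΔ : fderiv ℝ (fun w => fderiv ℝ φ w 1) z 1 + fderiv ℝ (fun w => fderiv ℝ φ w I) z I = 0) :
    lapR (fun w => ‖φ w‖ ^ q) z
      = q * (q - 2) * ‖φ z‖ ^ (q - 4) * (⟪φ z, fderiv ℝ φ z 1⟫ ^ 2 + ⟪φ z, fderiv ℝ φ z I⟫ ^ 2)
        + q * ‖φ z‖ ^ (q - 2) * (‖fderiv ℝ φ z 1‖ ^ 2 + ‖fderiv ℝ φ z I‖ ^ 2) := by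
  rw [lapR, fderiv_fderiv_norm_rpow_apply q 1 hφ hφ₁, fderiv_fderiv_norm_rpow_apply q I hφ hφI]
  have h0 : ⟪φ z, fderiv ℝ (fun w => fderiv ℝ φ w 1) z 1⟫
      + ⟪φ z, fderiv ℝ (fun w => fderiv ℝ φ w I) z I⟫ = 0 := by
    rw [← inner_add_right, hΔ, inner_zero_right]
  linear_combination q * ‖φ z‖ ^ (q - 2) * h0

theorem norm_add_conj_sq_add_norm_I_mul_add_conj_sq (a b : ℂ) :
    ‖a + conj b‖ ^ 2 + ‖I * a + conj (I * b)‖ ^ 2 = 2 * (‖a‖ ^ 2 + ‖b‖ ^ 2) := by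
  have hI : I * a + conj (I * b) = I * (a - conj b) := by
    simp only [map_mul, conj_I]
    ring
  rw [hI, norm_mul, norm_I, one_mul, norm_add_sq_real, norm_sub_sq_real, norm_conj]
  ring

theorem inner_add_conj_sq_add_inner_I_mul_add_conj_sq (a b c : ℂ) :
    ⟪c, a + conj b⟫ ^ 2 + ⟪c, I * a + conj (I * b)⟫ ^ 2 = ‖a * conj c + b * c‖ ^ 2 := by
  simp only [Complex.inner, Complex.sq_norm, normSq_apply, mul_re, mul_im, add_re, add_im, conj_re,
    conj_im, I_re, I_im]
  ring

theorem sq_norm_mul_sq_sub_le_inner_add_conj_sq_add (a b c : ℂ) :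
    ‖c‖ ^ 2 * (‖a‖ - ‖b‖) ^ 2
      ≤ ⟪c, a + conj b⟫ ^ 2 + ⟪c, I * a + conj (I * b)⟫ ^ 2 := by
  rw [inner_add_conj_sq_add_inner_I_mul_add_conj_sq, ← mul_pow, sq_le_sq, abs_norm]
  calc |‖c‖ * (‖a‖ - ‖b‖)| = |‖a * conj c‖ - ‖-(b * c)‖| := by
        rw [norm_neg, norm_mul, norm_mul, norm_conj, ← sub_mul, mul_comm]
    _ ≤ ‖a * conj c - -(b * c)‖ := abs_norm_sub_norm_le _ _
    _ = ‖a * conj c + b * c‖ := by rw [sub_neg_eq_add]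

section AddConj

variable {g h : ℂ → ℂ}

theorem differentiableAt_add_conj {w : ℂ} (hg : DifferentiableAt ℂ g w)
    (hh : DifferentiableAt ℂ h w) : DifferentiableAt ℝ (fun w => g w + conj (h w)) w :=
  (hg.restrictScalars ℝ).add (conjCLE.differentiableAt.comp w (hh.restrictScalars ℝ))

theorem fderiv_add_conj_apply {w : ℂ} (hg : DifferentiableAt ℂ g w)
    (hh : DifferentiableAt ℂ h w) (v : ℂ) :
    fderiv ℝ (fun w => g w + conj (h w)) w v = v * deriv g w + conj (v * deriv h w) := by
  have hd : HasFDerivAt (fun w => g w + conj (h w)) _ w := (hg.hasFDerivAt.restrictScalars ℝ).add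
    (conjCLE.hasFDerivAt.comp w (hh.hasFDerivAt.restrictScalars ℝ))
  rw [hd.fderiv]
  simp

theorem fderiv_add_conj_apply_eventuallyEq {s : Set ℂ} (hs : IsOpen s)
    (hg : DifferentiableOn ℂ g s) (hh : DifferentiableOn ℂ h s) {z : ℂ} (hz : z ∈ s) (v : ℂ) :
    (fun w => fderiv ℝ (fun u => g u + conj (h u)) w v)
      =ᶠ[𝓝 z] fun w => v * deriv g w + conj (v * deriv h w) :=
  eventually_of_mem (hs.mem_nhds hz) fun _ hw =>
    fderiv_add_conj_apply (hg.differentiableAt (hs.mem_nhds hw))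
      (hh.differentiableAt (hs.mem_nhds hw)) v

theorem differentiableAt_fderiv_add_conj_apply {s : Set ℂ} (hs : IsOpen s)
    (hg : DifferentiableOn ℂ g s) (hh : DifferentiableOn ℂ h s) {z : ℂ} (hz : z ∈ s) (v : ℂ) :
    DifferentiableAt ℝ (fun w => fderiv ℝ (fun u => g u + conj (h u)) w v) z :=
  (differentiableAt_add_conj
    (((hg.deriv hs).differentiableAt (hs.mem_nhds hz)).const_mul v)
    (((hh.deriv hs).differentiableAt (hs.mem_nhds hz)).const_mul v)).congr_of_eventuallyEq
    (fderiv_add_conj_apply_eventuallyEq hs hg hh hz v)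

theorem fderiv_fderiv_add_conj_apply {s : Set ℂ} (hs : IsOpen s)
    (hg : DifferentiableOn ℂ g s) (hh : DifferentiableOn ℂ h s) {z : ℂ} (hz : z ∈ s) (v : ℂ) :
    fderiv ℝ (fun w => fderiv ℝ (fun u => g u + conj (h u)) w v) z v
      = v ^ 2 * deriv (deriv g) z + conj (v ^ 2 * deriv (deriv h) z) := by
  have hg' := (hg.deriv hs).differentiableAt (hs.mem_nhds hz)
  have hh' := (hh.deriv hs).differentiableAt (hs.mem_nhds hz)
  rw [(fderiv_add_conj_apply_eventuallyEq hs hg hh hz v).fderiv_eq,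
    fderiv_add_conj_apply (hg'.const_mul v) (hh'.const_mul v), deriv_const_mul _ hg',
    deriv_const_mul _ hh']
  ring_nf

theorem lapR_norm_rpow_add_conj (q : ℝ) {s : Set ℂ} (hs : IsOpen s)
    (hg : DifferentiableOn ℂ g s) (hh : DifferentiableOn ℂ h s)
    (h0 : ∀ w ∈ s, g w + conj (h w) ≠ 0) {z : ℂ} (hz : z ∈ s) :
    lapR (fun w => ‖g w + conj (h w)‖ ^ q) z
      = q * (q - 2) * ‖g z + conj (h z)‖ ^ (q - 4)
          * (⟪g z + conj (h z), deriv g z + conj (deriv h z)⟫ ^ 2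
            + ⟪g z + conj (h z), I * deriv g z + conj (I * deriv h z)⟫ ^ 2)
        + 2 * q * ‖g z + conj (h z)‖ ^ (q - 2) * (‖deriv g z‖ ^ 2 + ‖deriv h z‖ ^ 2) := by
  have hd : ∀ w ∈ s, DifferentiableAt ℂ g w ∧ DifferentiableAt ℂ h w := fun w hw =>
    ⟨hg.differentiableAt (hs.mem_nhds hw), hh.differentiableAt (hs.mem_nhds hw)⟩
  have hφ : ∀ᶠ w in 𝓝 z, DifferentiableAt ℝ (fun u => g u + conj (h u)) w
      ∧ g w + conj (h w) ≠ 0 :=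
    eventually_of_mem (hs.mem_nhds hz) fun w hw =>
      ⟨differentiableAt_add_conj (hd w hw).1 (hd w hw).2, h0 w hw⟩
  have hΔ : fderiv ℝ (fun w => fderiv ℝ (fun u => g u + conj (h u)) w 1) z 1
      + fderiv ℝ (fun w => fderiv ℝ (fun u => g u + conj (h u)) w I) z I = 0 := by
    rw [fderiv_fderiv_add_conj_apply hs hg hh hz, fderiv_fderiv_add_conj_apply hs hg hh hz]
    simp only [one_pow, one_mul, I_sq, neg_one_mul, map_neg]
    ring
  rw [lapR_norm_rpow q hφ (differentiableAt_fderiv_add_conj_apply hs hg hh hz 1)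
    (differentiableAt_fderiv_add_conj_apply hs hg hh hz I) hΔ,
    fderiv_add_conj_apply (hd z hz).1 (hd z hz).2, fderiv_add_conj_apply (hd z hz).1 (hd z hz).2]
  simp only [one_mul]
  rw [norm_add_conj_sq_add_norm_I_mul_add_conj_sq]
  ring

theorem lapR_norm_rpow_add_conj_le {q : ℝ} (hq0 : 0 ≤ q) (hq2 : q ≤ 2)
    {s : Set ℂ} (hs : IsOpen s) (hg : DifferentiableOn ℂ g s) (hh : DifferentiableOn ℂ h s)
    (h0 : ∀ w ∈ s, g w + conj (h w) ≠ 0) {z : ℂ} (hz : z ∈ s) :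
    lapR (fun w => ‖g w + conj (h w)‖ ^ q) z
      ≤ ‖g z + conj (h z)‖ ^ (q - 2) * (q * (q - 2) * (‖deriv g z‖ - ‖deriv h z‖) ^ 2
          + 2 * q * (‖deriv g z‖ ^ 2 + ‖deriv h z‖ ^ 2)) := by
  rw [lapR_norm_rpow_add_conj q hs hg hh h0 hz]
  set c := g z + conj (h z)
  have hc : 0 < ‖c‖ := norm_pos_iff.mpr (h0 z hz)
  have hpow : ‖c‖ ^ (q - 4) * ‖c‖ ^ 2 = ‖c‖ ^ (q - 2) := by
    rw [← Real.rpow_natCast, ← Real.rpow_add hc]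
    congr 1
    push_cast
    ring
  have hlow := sq_norm_mul_sq_sub_le_inner_add_conj_sq_add (deriv g z) (deriv h z) c
  have hneg : q * (q - 2) * ‖c‖ ^ (q - 4) ≤ 0 :=
    mul_nonpos_of_nonpos_of_nonneg (mul_nonpos_of_nonneg_of_nonpos hq0 (by linarith))
      (by positivity)
  calc _ ≤ q * (q - 2) * ‖c‖ ^ (q - 4) * (‖c‖ ^ 2 * (‖deriv g z‖ - ‖deriv h z‖) ^ 2)
          + 2 * q * ‖c‖ ^ (q - 2) * (‖deriv g z‖ ^ 2 + ‖deriv h z‖ ^ 2) :=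
        add_le_add_left (mul_le_mul_of_nonpos_left hlow hneg) _
    _ = _ := by
        rw [← hpow]
        ring

end AddConj

theorem sq_add_sq_le_of_le_dilatation {K x y : ℝ} (hK : 1 ≤ K) (hx : 0 ≤ x) (hy : 0 ≤ y)
    (hyx : y ≤ (K - 1) / (K + 1) * x) : x ^ 2 + y ^ 2 ≤ (1 + K ^ 2) / 2 * (x - y) ^ 2 := by
  have hsum : x + y ≤ K * (x - y) := by
    rw [div_mul_eq_mul_div, le_div_iff₀ (by linarith)] at hyx
    linarith
  have hsq : (x + y) ^ 2 ≤ K ^ 2 * (x - y) ^ 2 := by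
    rw [← mul_pow]
    exact pow_le_pow_left₀ (by linarith) hsum 2
  linarith

theorem dilatation_coeff_nonneg {K p : ℝ} (hK : 1 ≤ K) (hp0 : 0 ≤ p) :
    0 ≤ (1 + K ^ 2) / 2 * (p * (p - 2) / K ^ 2 + 2 * p) := by
  have hK2 : 1 ≤ K ^ 2 := one_le_pow₀ hK
  have : p * (p - 2) / K ^ 2 + 2 * p = p * (p - 2 + 2 * K ^ 2) / K ^ 2 := by
    field_simp
  rw [this]
  have : 0 ≤ p - 2 + 2 * K ^ 2 := by linarith
  positivity

theorem mul_sub_two_mul_sq_add_two_mul_le {K p t u n : ℝ} (hK : 1 ≤ K) (hp0 : 0 ≤ p) (hp2 : p ≤ 2)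
    (hu : u ≤ (1 + K ^ 2) / 2 * t ^ 2) (htn : t ^ 2 ≤ n ^ 2) :
    p * (p - 2) * t ^ 2 + 2 * p * u ≤ (1 + K ^ 2) / 2 * (p * (p - 2) / K ^ 2 + 2 * p) * n ^ 2 := by
  have hK2 : 1 ≤ K ^ 2 := one_le_pow₀ hK
  have hpp : p * (p - 2) ≤ 0 := mul_nonpos_of_nonneg_of_nonpos hp0 (by linarith)
  have hcoef : p * (p - 2) + p * (1 + K ^ 2) ≤ (1 + K ^ 2) / 2 * (p * (p - 2) / K ^ 2 + 2 * p) := by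
    have : (1 + K ^ 2) / 2 * (p * (p - 2) / K ^ 2) = p * (p - 2) * ((1 + K ^ 2) / (2 * K ^ 2)) := by
      field_simp
    have hr : (1 + K ^ 2) / (2 * K ^ 2) ≤ 1 := by
      rw [div_le_one (by positivity)]
      linarith
    nlinarith [mul_le_mul_of_nonpos_left hr hpp]
  calc p * (p - 2) * t ^ 2 + 2 * p * u ≤ (p * (p - 2) + p * (1 + K ^ 2)) * t ^ 2 := by
        nlinarith [mul_le_mul_of_nonneg_left hu hp0]
    _ ≤ (1 + K ^ 2) / 2 * (p * (p - 2) / K ^ 2 + 2 * p) * t ^ 2 := by gcongr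
    _ ≤ (1 + K ^ 2) / 2 * (p * (p - 2) / K ^ 2 + 2 * p) * n ^ 2 := by
        gcongr
        exact dilatation_coeff_nonneg hK hp0

/-- For a `K`-quasiconformal-type harmonic `f = g + conj h` on the unit disk
(with `|h'| ≤ k|g'|`, `k = (K−1)/(K+1)`), nonvanishing, and `p ∈ (1,2]`,
`Δ(|f|^p) ≤ ((1+K²)/2)(p(p−2)/K² + 2p) |Re f|^{p−2} |g' + h'|²`. -/
theorem laplacian_abs_pow_le (g h : ℂ → ℂ)
    (hg : DifferentiableOn ℂ g (Metric.ball 0 1))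
    (hh : DifferentiableOn ℂ h (Metric.ball 0 1))
    (f : ℂ → ℂ) (hf : ∀ z ∈ Metric.ball (0 : ℂ) 1, f z = g z + (starRingEnd ℂ) (h z))
    (hnv : ∀ z ∈ Metric.ball (0 : ℂ) 1, f z ≠ 0)
    (K k : ℝ) (hK : 1 ≤ K) (hk : k = (K - 1) / (K + 1))
    (hqr : ∀ z ∈ Metric.ball (0 : ℂ) 1,
      ‖deriv h z‖ ≤ k * ‖deriv g z‖)
    (p : ℝ) (hp1 : 1 < p) (hp2 : p ≤ 2)
    (z : ℂ) (hz : z ∈ Metric.ball (0 : ℂ) 1) (hre : (f z).re ≠ 0) :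
    lapR (fun w => ‖f w‖ ^ p) z
      ≤ ((1 + K ^ 2) / 2) * (p * (p - 2) / K ^ 2 + 2 * p)
          * |(f z).re| ^ (p - 2) * ‖deriv g z + deriv h z‖ ^ 2 := by
  have hs : IsOpen (Metric.ball (0 : ℂ) 1) := Metric.isOpen_ball
  have hp0 : 0 ≤ p := by linarith
  have hlap : lapR (fun w => ‖f w‖ ^ p) z = lapR (fun w => ‖g w + conj (h w)‖ ^ p) z :=
    lapR_congr (eventually_of_mem (hs.mem_nhds hz) fun w hw => by simp only [hf w hw])
  have hM := lapR_norm_rpow_add_conj_le hp0 hp2 hs hg hh (fun w hw => hf w hw ▸ hnv w hw) hz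
  rw [← hf z hz] at hM
  have hdil := sq_add_sq_le_of_le_dilatation hK (norm_nonneg _) (norm_nonneg _) (hk ▸ hqr z hz)
  have htri : (‖deriv g z‖ - ‖deriv h z‖) ^ 2 ≤ ‖deriv g z + deriv h z‖ ^ 2 := by
    rw [sq_le_sq, abs_norm]
    simpa using abs_norm_sub_norm_le (deriv g z) (-deriv h z)
  have hRe : ‖f z‖ ^ (p - 2) ≤ |(f z).re| ^ (p - 2) :=
    Real.rpow_le_rpow_of_nonpos (abs_pos.mpr hre) (abs_re_le_norm _) (by linarith)
  rw [hlap]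
  calc _ ≤ ‖f z‖ ^ (p - 2) * (p * (p - 2) * (‖deriv g z‖ - ‖deriv h z‖) ^ 2
          + 2 * p * (‖deriv g z‖ ^ 2 + ‖deriv h z‖ ^ 2)) := hM
    _ ≤ ‖f z‖ ^ (p - 2) * ((1 + K ^ 2) / 2 * (p * (p - 2) / K ^ 2 + 2 * p)
          * ‖deriv g z + deriv h z‖ ^ 2) := by
        gcongr
        exact mul_sub_two_mul_sq_add_two_mul_le hK hp0 hp2 hdil htri
    _ ≤ |(f z).re| ^ (p - 2) * ((1 + K ^ 2) / 2 * (p * (p - 2) / K ^ 2 + 2 * p)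
          * ‖deriv g z + deriv h z‖ ^ 2) := by
        gcongr
        exact mul_nonneg (dilatation_coeff_nonneg hK hp0) (sq_nonneg _)
    _ = _ := by ring
end
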